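/- arXiv:2102.04531 — 6 statements merged into one kernel-verified Lean document; each statement's English description precedes it below -/
import Mathlib

section
/- Let Φ_L be the initialization map of a subsystem initialization (V', τ') of ℂ^{d_L} into ℂ^{d_P} with τ' of full rank, let 𝒩 : M_{d_P}(ℂ) → M_{d_P}(ℂ) be a CPTP map, and suppose there exist a subsystem initialization (V, τ_F) of ℂ^{d_L} into ℂ^{d_P} and a CPTP map Φ_P such that Φ_P(Φ_L(ρ)) = V(ρ ⊗ τ_F ⊕ 0)V* and Φ_P(𝒩(Φ_L(ρ))) = Φ_P(Φ_L(ρ)) for every density operator ρ on ℂ^{d_L}. Then for every λ ∈ [0,1], with ℳ_λ := λ𝒩 + (1−λ)·id, and for every pair of orthogonal unit vectors ψ_i, ψ_j ∈ ℂ^{d_L}, one has tr( Φ_L(|ψ_i⟩⟨ψ_i|) · ℳ_λ(Φ_L(|ψ_j⟩⟨ψ_j|)) ) = 0. -/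
open Matrix Kronecker
open scoped ComplexOrder

noncomputable section

/-- A density operator: positive semidefinite with trace 1. -/
def IsDensity {n : Type*} [Fintype n] (ρ : Matrix n n ℂ) : Prop :=
  ρ.PosSemidef ∧ ρ.trace = 1

/-- A map between matrix spaces is CPTP if it has a Kraus representation. -/
def IsCPTP {n₁ n₂ : Type*} [Fintype n₁] [Fintype n₂] [DecidableEq n₁] [DecidableEq n₂]
    (Φ : Matrix n₁ n₁ ℂ → Matrix n₂ n₂ ℂ) : Prop :=
  ∃ (m : ℕ) (K : Fin m → Matrix n₂ n₁ ℂ),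
    (∀ A, Φ A = ∑ i, K i * A * (K i)ᴴ) ∧ (∑ i, (K i)ᴴ * K i = 1)

/-- A unitary matrix (between possibly differently indexed spaces). -/
def IsUnitaryMx {m n : Type*} [Fintype m] [Fintype n] [DecidableEq m] [DecidableEq n]
    (V : Matrix m n ℂ) : Prop :=
  Vᴴ * V = 1 ∧ V * Vᴴ = 1

/-- The map `ρ ↦ V (ρ ⊗ τ ⊕ 0) Vᴴ` of a subsystem initialization `(V, τ)`. -/
def initMap {L F R P : Type*} [Fintype L] [Fintype F] [Fintype R] [Fintype P]
    (V : Matrix P ((L × F) ⊕ R) ℂ) (τ : Matrix F F ℂ) (ρ : Matrix L L ℂ) :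
    Matrix P P ℂ :=
  V * (Matrix.fromBlocks (ρ ⊗ₖ τ) 0 0 0 : Matrix ((L × F) ⊕ R) ((L × F) ⊕ R) ℂ) * Vᴴ

/-- The orthogonal projection `Π_V = V (1 ⊗ 1 ⊕ 0) Vᴴ` onto the image of the
tensor summand. -/
def projOf {L F R P : Type*} [Fintype L] [Fintype F] [Fintype R] [Fintype P]
    [DecidableEq L] [DecidableEq F]
    (V : Matrix P ((L × F) ⊕ R) ℂ) : Matrix P P ℂ :=
  V * (Matrix.fromBlocks 1 0 0 0 : Matrix ((L × F) ⊕ R) ((L × F) ⊕ R) ℂ) * Vᴴ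

/-!
The encoder `Φ_P` sends `A = Φ_L(|ψ_i⟩⟨ψ_i|)` into the code block
`Q = V (|ψ_i⟩⟨ψ_i| ⊗ 1 ⊕ 0) V*` and sends both `Y = Φ_L(|ψ_j⟩⟨ψ_j|)` and `Y = 𝒩(Φ_L(|ψ_j⟩⟨ψ_j|))`
to states annihilated by `Q`. Pulling `Q` back through the Kraus operators of `Φ_P` gives an
effect `0 ≤ E ≤ 1` with `tr(E A) = 1` and `tr(E Y) = 0`. For positive semidefinite matrices a
vanishing trace pairing forces a vanishing product, so `(1 - E) A = 0` and `E Y = 0`, whence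
`A Y = A E Y = 0`; the claim follows by linearity in `Y`, for every coefficient `λ`.
-/

namespace Matrix

variable {n : Type*} [Fintype n]

open scoped MatrixOrder in
theorem PosSemidef.mul_eq_zero_of_trace_mul_eq_zero {A B : Matrix n n ℂ}
    (hA : A.PosSemidef) (hB : B.PosSemidef) (h : (A * B).trace = 0) : A * B = 0 := by
  classical
  obtain ⟨P, rfl⟩ := CStarAlgebra.nonneg_iff_eq_star_mul_self.mp hA.nonneg
  obtain ⟨Q, rfl⟩ := CStarAlgebra.nonneg_iff_eq_star_mul_self.mp hB.nonneg
  simp only [star_eq_conjTranspose] at h ⊢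
  have hPQ : P * Qᴴ = 0 := by
    rw [← trace_conjTranspose_mul_self_eq_zero_iff, ← h, conjTranspose_mul,
      conjTranspose_conjTranspose, Matrix.mul_assoc, trace_mul_comm Q]
    simp only [Matrix.mul_assoc]
  rw [Matrix.mul_assoc, ← Matrix.mul_assoc P, hPQ, Matrix.zero_mul, Matrix.mul_zero]

theorem posSemidef_one_sub_of_mul_self_eq [DecidableEq n] {P : Matrix n n ℂ}
    (hP : P.IsHermitian) (hPP : P * P = P) : (1 - P).PosSemidef := by
  have h : 1 - P = (1 - P)ᴴ * (1 - P) := by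
    rw [conjTranspose_sub, conjTranspose_one, hP.eq, Matrix.sub_mul, Matrix.mul_sub,
      Matrix.mul_sub, hPP]
    simp
  rw [h]
  exact posSemidef_conjTranspose_mul_self _

theorem mul_eq_zero_of_trace_effect_mul [DecidableEq n] {E A Y : Matrix n n ℂ}
    (hE : E.PosSemidef) (hE1 : (1 - E).PosSemidef) (hA : A.PosSemidef) (hY : Y.PosSemidef)
    (hEA : (E * A).trace = A.trace) (hEY : (E * Y).trace = 0) : A * Y = 0 := by
  have hA_eq : (1 - E) * A = 0 := hE1.mul_eq_zero_of_trace_mul_eq_zero hA <| by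
    rw [Matrix.sub_mul, Matrix.one_mul, trace_sub, hEA, sub_self]
  have hAE : A * E = A := by
    have := congrArg conjTranspose hA_eq
    rw [conjTranspose_mul, conjTranspose_sub, conjTranspose_one, hA.isHermitian.eq,
      hE.isHermitian.eq, Matrix.mul_sub, Matrix.mul_one, conjTranspose_zero, sub_eq_zero] at this
    exact this.symm
  rw [← hAE, Matrix.mul_assoc, hE.mul_eq_zero_of_trace_mul_eq_zero hY hEY, Matrix.mul_zero]

theorem vecMulVec_star_mul_vecMulVec_star (ψ φ : n → ℂ) :
    vecMulVec ψ (star ψ) * vecMulVec φ (star φ) = (star ψ ⬝ᵥ φ) • vecMulVec ψ (star φ) := by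
  rw [vecMulVec_mul_vecMulVec, vecMulVec_smul]

end Matrix

open Matrix

theorem isDensity_vecMulVec_self_star {n : Type*} [Fintype n] {ψ : n → ℂ}
    (hψ : star ψ ⬝ᵥ ψ = 1) : IsDensity (vecMulVec ψ (star ψ)) :=
  ⟨posSemidef_vecMulVec_self_star ψ, by rw [trace_vecMulVec, dotProduct_comm, hψ]⟩

section IsCPTP

variable {n m : Type*} [Fintype n] [Fintype m] [DecidableEq n] [DecidableEq m]
  {Φ : Matrix n n ℂ → Matrix m m ℂ}

theorem IsCPTP.posSemidef (hΦ : IsCPTP Φ) {A : Matrix n n ℂ} (hA : A.PosSemidef) :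
    (Φ A).PosSemidef := by
  obtain ⟨k, K, hK, -⟩ := hΦ
  rw [hK]
  exact posSemidef_sum _ fun i _ => hA.mul_mul_conjTranspose_same (K i)

theorem IsCPTP.exists_dual_effect (hΦ : IsCPTP Φ) {Q : Matrix m m ℂ} (hQ : Q.PosSemidef)
    (hQ1 : (1 - Q).PosSemidef) :
    ∃ E : Matrix n n ℂ, E.PosSemidef ∧ (1 - E).PosSemidef ∧
      ∀ A, (Q * Φ A).trace = (E * A).trace := by
  obtain ⟨k, K, hK, hK1⟩ := hΦ
  refine ⟨∑ i, (K i)ᴴ * Q * K i, posSemidef_sum _ fun i _ => hQ.conjTranspose_mul_mul_same _,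
    ?_, fun A => ?_⟩
  · have h : 1 - ∑ i, (K i)ᴴ * Q * K i = ∑ i, (K i)ᴴ * (1 - Q) * K i := by
      simp only [Matrix.mul_sub, Matrix.sub_mul, Matrix.mul_one, Finset.sum_sub_distrib, hK1]
    rw [h]
    exact posSemidef_sum _ fun i _ => hQ1.conjTranspose_mul_mul_same _
  · simp only [hK, Finset.mul_sum, Finset.sum_mul, trace_sum]
    refine Finset.sum_congr rfl fun i _ => ?_
    rw [← Matrix.mul_assoc, trace_mul_cycle, Matrix.mul_assoc, Matrix.mul_assoc]
    simp only [← Matrix.mul_assoc]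

theorem IsCPTP.mul_eq_zero_of_trace_effect_mul (hΦ : IsCPTP Φ) {Q : Matrix m m ℂ}
    (hQ : Q.PosSemidef) (hQ1 : (1 - Q).PosSemidef) {A Y : Matrix n n ℂ} (hA : A.PosSemidef)
    (hY : Y.PosSemidef) (hQA : (Q * Φ A).trace = A.trace) (hQY : (Q * Φ Y).trace = 0) :
    A * Y = 0 := by
  obtain ⟨E, hE, hE1, hQE⟩ := hΦ.exists_dual_effect hQ hQ1
  exact Matrix.mul_eq_zero_of_trace_effect_mul hE hE1 hA hY (hQE A ▸ hQA) (hQE Y ▸ hQY)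

end IsCPTP

theorem conjTranspose_submatrix_inl_mul_self {P Q R : Type*} [Fintype P] [DecidableEq Q]
    [DecidableEq R] {V : Matrix P (Q ⊕ R) ℂ} (hV : Vᴴ * V = 1) :
    (V.submatrix id Sum.inl)ᴴ * V.submatrix id Sum.inl = 1 := by
  rw [conjTranspose_submatrix, ← submatrix_mul _ _ _ id _ Function.bijective_id, hV,
    submatrix_one _ Sum.inl_injective]

section initMap

variable {L F R P : Type*} [Fintype L] [Fintype F] [Fintype R] [Fintype P]
  (V : Matrix P ((L × F) ⊕ R) ℂ)

theorem initMap_eq_mul_mul_conjTranspose (τ : Matrix F F ℂ) (ρ : Matrix L L ℂ) :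
    initMap V τ ρ = V.submatrix id Sum.inl * (ρ ⊗ₖ τ) * (V.submatrix id Sum.inl)ᴴ := by
  ext i j
  simp [initMap, mul_apply, Fintype.sum_sum_type]

theorem initMap_zero (τ : Matrix F F ℂ) : initMap V τ (0 : Matrix L L ℂ) = 0 := by
  simp [initMap]

variable {V}

theorem Matrix.PosSemidef.initMap {τ : Matrix F F ℂ} {ρ : Matrix L L ℂ} (hρ : ρ.PosSemidef)
    (hτ : τ.PosSemidef) : (initMap V τ ρ).PosSemidef := by
  rw [initMap_eq_mul_mul_conjTranspose]
  exact (hρ.kronecker hτ).mul_mul_conjTranspose_same _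

variable [DecidableEq L] [DecidableEq F] [DecidableEq R]

theorem initMap_mul_initMap (hV : Vᴴ * V = 1) (τ σ : Matrix F F ℂ) (ρ η : Matrix L L ℂ) :
    initMap V τ ρ * initMap V σ η = initMap V (τ * σ) (ρ * η) := by
  simp only [initMap_eq_mul_mul_conjTranspose, Matrix.mul_assoc,
    ← Matrix.mul_assoc _ (V.submatrix id Sum.inl), conjTranspose_submatrix_inl_mul_self hV,
    Matrix.one_mul, mul_kronecker_mul]

theorem trace_initMap (hV : Vᴴ * V = 1) (τ : Matrix F F ℂ) (ρ : Matrix L L ℂ) :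
    (initMap V τ ρ).trace = ρ.trace * τ.trace := by
  rw [initMap_eq_mul_mul_conjTranspose, trace_mul_cycle, conjTranspose_submatrix_inl_mul_self hV,
    Matrix.one_mul, trace_kronecker]

theorem isDensity_initMap (hV : Vᴴ * V = 1) {τ : Matrix F F ℂ} {ρ : Matrix L L ℂ}
    (hτ : IsDensity τ) (hρ : IsDensity ρ) : IsDensity (initMap V τ ρ) :=
  ⟨hρ.1.initMap hτ.1, by rw [trace_initMap hV, hρ.2, hτ.2, one_mul]⟩

theorem exists_effect_trace_mul_initMap [DecidableEq P] (hV : Vᴴ * V = 1) {τ : Matrix F F ℂ}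
    (hτ : IsDensity τ) {ψ φ : L → ℂ} (hψ : star ψ ⬝ᵥ ψ = 1) (hψφ : star ψ ⬝ᵥ φ = 0) :
    ∃ Q : Matrix P P ℂ, Q.PosSemidef ∧ (1 - Q).PosSemidef ∧
      (Q * initMap V τ (vecMulVec ψ (star ψ))).trace = 1 ∧
      (Q * initMap V τ (vecMulVec φ (star φ))).trace = 0 := by
  have hρ := isDensity_vecMulVec_self_star hψ
  have hρρ : vecMulVec ψ (star ψ) * vecMulVec ψ (star ψ) = vecMulVec ψ (star ψ) := by
    rw [vecMulVec_star_mul_vecMulVec_star, hψ, one_smul]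
  have hQ : (initMap V 1 (vecMulVec ψ (star ψ))).PosSemidef := hρ.1.initMap PosSemidef.one
  refine ⟨_, hQ, posSemidef_one_sub_of_mul_self_eq hQ.isHermitian ?_, ?_, ?_⟩
  · rw [initMap_mul_initMap hV, hρρ, Matrix.one_mul]
  · rw [initMap_mul_initMap hV, hρρ, Matrix.one_mul, (isDensity_initMap hV hτ hρ).2]
  · rw [initMap_mul_initMap hV, vecMulVec_star_mul_vecMulVec_star, hψφ, zero_smul, initMap_zero,
      trace_zero]

end initMap

/-- if a noise-tolerant encoder into a code exists, then the
noisy initializations of orthogonal pure states stay orthogonal (in the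
trace pairing), for every convex mixture `ℳ_λ` of the noise with the identity. -/
theorem stmt2 (dL dP dF' dR' : ℕ)
    (V' : Matrix (Fin dP) ((Fin dL × Fin dF') ⊕ Fin dR') ℂ)
    (hV' : IsUnitaryMx V')
    (τ' : Matrix (Fin dF') (Fin dF') ℂ)
    (hτ' : τ'.PosDef ∧ τ'.trace = 1)
    (𝒩 : Matrix (Fin dP) (Fin dP) ℂ → Matrix (Fin dP) (Fin dP) ℂ)
    (h𝒩 : IsCPTP 𝒩)
    (henc : ∃ (dF dR : ℕ) (V : Matrix (Fin dP) ((Fin dL × Fin dF) ⊕ Fin dR) ℂ)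
        (τF : Matrix (Fin dF) (Fin dF) ℂ)
        (ΦP : Matrix (Fin dP) (Fin dP) ℂ → Matrix (Fin dP) (Fin dP) ℂ),
        IsUnitaryMx V ∧ IsDensity τF ∧ IsCPTP ΦP ∧
        (∀ ρ : Matrix (Fin dL) (Fin dL) ℂ, IsDensity ρ →
          ΦP (initMap V' τ' ρ) = initMap V τF ρ) ∧
        (∀ ρ : Matrix (Fin dL) (Fin dL) ℂ, IsDensity ρ →
          ΦP (𝒩 (initMap V' τ' ρ)) = ΦP (initMap V' τ' ρ))) :
    ∀ l ∈ Set.Icc (0:ℝ) 1, ∀ ψi ψj : Fin dL → ℂ,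
      star ψi ⬝ᵥ ψi = 1 → star ψj ⬝ᵥ ψj = 1 → star ψi ⬝ᵥ ψj = 0 →
      (initMap V' τ' (Matrix.vecMulVec ψi (star ψi)) *
        ((l : ℂ) • 𝒩 (initMap V' τ' (Matrix.vecMulVec ψj (star ψj))) +
         ((1 - l : ℝ) : ℂ) • initMap V' τ' (Matrix.vecMulVec ψj (star ψj)))).trace = 0 := by
  intro l _ ψi ψj hi hj hij
  obtain ⟨dF, dR, V, τF, ΦP, hV, hτF, hΦP, hcode, hfix⟩ := henc
  have hρi := isDensity_vecMulVec_self_star hi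
  have hρj := isDensity_vecMulVec_self_star hj
  obtain ⟨Q, hQ, hQ1, hQi, hQj⟩ := exists_effect_trace_mul_initMap hV.1 hτF hi hij
  have hτ'd : IsDensity τ' := ⟨hτ'.1.posSemidef, hτ'.2⟩
  have hA := isDensity_initMap hV'.1 hτ'd hρi
  have hB := isDensity_initMap hV'.1 hτ'd hρj
  have hQA : (Q * ΦP (initMap V' τ' (vecMulVec ψi (star ψi)))).trace =
      (initMap V' τ' (vecMulVec ψi (star ψi))).trace := by
    rw [hcode _ hρi, hQi, hA.2]
  have hAB := hΦP.mul_eq_zero_of_trace_effect_mul hQ hQ1 hA.1 hB.1 hQA (by rw [hcode _ hρj, hQj])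
  have hANB := hΦP.mul_eq_zero_of_trace_effect_mul hQ hQ1 hA.1 (h𝒩.posSemidef hB.1) hQA
    (by rw [hfix _ hρj, hcode _ hρj, hQj])
  rw [Matrix.mul_add, Matrix.mul_smul, Matrix.mul_smul, hAB, hANB, smul_zero, smul_zero,
    add_zero, trace_zero]
end
end

section
/- Let S_1, …, S_r be pairwise commuting Hermitian unitary N×N complex matrices with S_k² = 1 for each k, and let C_1, …, C_r be unitary N×N matrices such that C_k S_k = −S_k C_k for every k and C_k S_j = S_j C_k whenever j ≠ k. For each k define the CPTP map Φ_k(ρ) = A_{+,k} ρ A_{+,k}* + A_{−,k} ρ A_{−,k}*, where A_{+,k} = (1 + S_k)/2 and A_{−,k} = C_k(1 − S_k)/2. Let Π_𝒞 be the orthogonal projection onto the joint +1-eigenspace H_𝒞 = { ψ ∈ ℂ^N : S_k ψ = ψ for all k }. Then: (i) for every permutation π of {1,…,r} and every density operator ρ, the output ρ_out = Φ_{π(r)} ∘ ⋯ ∘ Φ_{π(1)}(ρ) satisfies Π_𝒞 ρ_out Π_𝒞 = ρ_out; and (ii) every density operator ρ with Π_𝒞 ρ Π_𝒞 = ρ satisfies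 Φ_k(ρ) = ρ for every k. -/
open Matrix Kronecker
open scoped ComplexOrder

noncomputable section

/-- The Kraus operator `A₊ = (1 + S)/2`. -/
def Apl {n : Type*} [Fintype n] [DecidableEq n] (S : Matrix n n ℂ) : Matrix n n ℂ :=
  (2:ℂ)⁻¹ • (1 + S)

/-- The Kraus operator `A₋ = C (1 - S)/2`. -/
def Ami {n : Type*} [Fintype n] [DecidableEq n] (C S : Matrix n n ℂ) : Matrix n n ℂ :=
  C * ((2:ℂ)⁻¹ • (1 - S))

/-- The CPTP map `Φ(ρ) = A₊ ρ A₊ᴴ + A₋ ρ A₋ᴴ` of a stabilizer/correction pair. -/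
def encMap {n : Type*} [Fintype n] [DecidableEq n] (S C : Matrix n n ℂ)
    (ρ : Matrix n n ℂ) : Matrix n n ℂ :=
  Apl S * ρ * (Apl S)ᴴ + Ami C S * ρ * (Ami C S)ᴴ

/-- Apply a list of maps in order (head first). -/
def seqApply {M : Type*} (fs : List (M → M)) (ρ : M) : M :=
  fs.foldl (fun a f => f a) ρ

namespace Stmt3Aux

variable {N : ℕ}

lemma ext_of_mulVec {A B : Matrix (Fin N) (Fin N) ℂ}
    (h : ∀ v, A.mulVec v = B.mulVec v) : A = B := by
  ext i j
  have := congrFun (h (Pi.single j 1)) i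
  simpa using this

lemma sapl {S : Matrix (Fin N) (Fin N) ℂ} (hS2 : S * S = 1) :
    S * Apl S = Apl S := by
  rw [Apl, Matrix.mul_smul, mul_add, mul_one, hS2, add_comm]

lemma sx {S : Matrix (Fin N) (Fin N) ℂ} (hS2 : S * S = 1) :
    S * ((2:ℂ)⁻¹ • (1 - S)) = -((2:ℂ)⁻¹ • (1 - S)) := by
  rw [Matrix.mul_smul, mul_sub, mul_one, hS2, ← smul_neg, neg_sub]

lemma sami {S C : Matrix (Fin N) (Fin N) ℂ} (hS2 : S * S = 1)
    (hCS : C * S = -(S * C)) : S * Ami C S = Ami C S := by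
  have hSC : S * C = -(C * S) := by rw [hCS, neg_neg]
  rw [Ami, ← mul_assoc, hSC, neg_mul, mul_assoc, sx hS2, mul_neg, neg_neg]

lemma s_encMap {S C : Matrix (Fin N) (Fin N) ℂ} (σ : Matrix (Fin N) (Fin N) ℂ)
    (hS2 : S * S = 1) (hCS : C * S = -(S * C)) :
    S * encMap S C σ = encMap S C σ := by
  simp only [encMap, mul_add, ← mul_assoc, sapl hS2, sami hS2 hCS]

lemma comm_encMap {S C S' σ : Matrix (Fin N) (Fin N) ℂ}
    (hc1 : S' * S = S * S') (hc2 : S' * C = C * S') (hσ : S' * σ = σ) :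
    S' * encMap S C σ = encMap S C σ := by
  have hA : S' * Apl S = Apl S * S' := by
    simp only [Apl, Matrix.mul_smul, Matrix.smul_mul, mul_add, add_mul,
      mul_one, one_mul, hc1]
  have hX : S' * ((2:ℂ)⁻¹ • (1 - S)) = ((2:ℂ)⁻¹ • (1 - S)) * S' := by
    simp only [Matrix.mul_smul, Matrix.smul_mul, mul_sub, sub_mul,
      mul_one, one_mul, hc1]
  have hB : S' * Ami C S = Ami C S * S' := by
    rw [Ami, ← mul_assoc, hc2, mul_assoc, hX, ← mul_assoc]
  simp only [encMap, mul_add, ← mul_assoc, hA, hB]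
  rw [mul_assoc (Apl S) S' σ, hσ, mul_assoc (Ami C S) S' σ, hσ]

lemma encMap_herm {S C σ : Matrix (Fin N) (Fin N) ℂ} (hσ : σᴴ = σ) :
    (encMap S C σ)ᴴ = encMap S C σ := by
  simp [encMap, conjTranspose_add, conjTranspose_mul, hσ, mul_assoc]

lemma seqApply_cons {M : Type*} (f : M → M) (fs : List (M → M)) (ρ : M) :
    seqApply (f :: fs) ρ = seqApply fs (f ρ) := rfl

lemma seq_fix {r : ℕ} (S C : Fin r → Matrix (Fin N) (Fin N) ℂ)
    (hS2 : ∀ k, S k * S k = 1)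
    (hScomm : ∀ k j, S k * S j = S j * S k)
    (hCS : ∀ k, C k * S k = -(S k * C k))
    (hCSj : ∀ k j, j ≠ k → C k * S j = S j * C k) :
    ∀ (L : List (Fin r)) (σ : Matrix (Fin N) (Fin N) ℂ) (k : Fin r),
      (k ∈ L ∨ S k * σ = σ) →
      S k * seqApply (L.map fun j => encMap (S j) (C j)) σ
        = seqApply (L.map fun j => encMap (S j) (C j)) σ
  | [], σ, k, h => by
      simpa [seqApply] using h.resolve_left (by simp)
  | j :: L, σ, k, h => by
      rw [List.map_cons, seqApply_cons]
      apply seq_fix S C hS2 hScomm hCS hCSj L (encMap (S j) (C j) σ) k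
      by_cases hkj : k = j
      · subst hkj
        exact Or.inr (s_encMap σ (hS2 k) (hCS k))
      · rcases h with hm | hfix
        · rcases List.mem_cons.mp hm with h1 | h2
          · exact absurd h1 hkj
          · exact Or.inl h2
        · exact Or.inr (comm_encMap (hScomm k j) (hCSj j k hkj).symm hfix)

lemma seq_herm {r : ℕ} (S C : Fin r → Matrix (Fin N) (Fin N) ℂ) :
    ∀ (L : List (Fin r)) (σ : Matrix (Fin N) (Fin N) ℂ), σᴴ = σ →
      (seqApply (L.map fun j => encMap (S j) (C j)) σ)ᴴ
        = seqApply (L.map fun j => encMap (S j) (C j)) σ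
  | [], σ, hσ => hσ
  | j :: L, σ, hσ => by
      rw [List.map_cons, seqApply_cons]
      exact seq_herm S C L _ (encMap_herm hσ)

end Stmt3Aux

open Stmt3Aux

/-- any ordered composition of the maps `Φ_k` prepares the joint
`+1`-eigenspace of the stabilizers (code space), and every density operator
supported on the code space is invariant under each `Φ_k`. -/
theorem stmt3 (N r : ℕ) (S C : Fin r → Matrix (Fin N) (Fin N) ℂ)
    (hSH : ∀ k, (S k).IsHermitian)
    (hS2 : ∀ k, S k * S k = 1)
    (hScomm : ∀ k j, S k * S j = S j * S k)
    (hCU : ∀ k, (C k)ᴴ * C k = 1 ∧ C k * (C k)ᴴ = 1)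
    (hCS : ∀ k, C k * S k = -(S k * C k))
    (hCSj : ∀ k j, j ≠ k → C k * S j = S j * C k)
    (Pc : Matrix (Fin N) (Fin N) ℂ)
    (hPcH : Pc.IsHermitian) (hPc2 : Pc * Pc = Pc)
    (hPceig : ∀ ψ : Fin N → ℂ, Pc.mulVec ψ = ψ ↔ ∀ k, (S k).mulVec ψ = ψ) :
    (∀ (π : Equiv.Perm (Fin r)) (ρ : Matrix (Fin N) (Fin N) ℂ), IsDensity ρ →
      Pc * seqApply (List.ofFn fun k => encMap (S (π k)) (C (π k))) ρ * Pc
        = seqApply (List.ofFn fun k => encMap (S (π k)) (C (π k))) ρ) ∧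
    (∀ ρ : Matrix (Fin N) (Fin N) ℂ, IsDensity ρ → Pc * ρ * Pc = ρ →
      ∀ k, encMap (S k) (C k) ρ = ρ) := by
  constructor
  · intro π ρ hρ
    have hlist : (List.ofFn fun k => encMap (S (π k)) (C (π k)))
        = (List.ofFn fun k => π k).map (fun j => encMap (S j) (C j)) := by
      rw [List.map_ofFn]; rfl
    rw [hlist]
    set ρo := seqApply ((List.ofFn fun k => π k).map fun j => encMap (S j) (C j)) ρ
      with hρo
    have hfix : ∀ k, S k * ρo = ρo := by
      intro k
      apply seq_fix S C hS2 hScomm hCS hCSj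
      left
      rw [List.mem_ofFn]
      exact ⟨π.symm k, by simp⟩
    have hherm : ρoᴴ = ρo := seq_herm S C _ ρ hρ.1.1.eq
    have hPcρ : Pc * ρo = ρo := by
      apply ext_of_mulVec
      intro v
      rw [← Matrix.mulVec_mulVec]
      exact (hPceig (ρo.mulVec v)).mpr fun k => by
        rw [Matrix.mulVec_mulVec, hfix k]
    have hρPc : ρo * Pc = ρo := by
      have h := congrArg conjTranspose hPcρ
      rwa [conjTranspose_mul, hherm, hPcH.eq] at h
    rw [hPcρ, hρPc]
  · intro ρ hρ hsupp k
    have hSPc : S k * Pc = Pc := by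
      apply ext_of_mulVec
      intro v
      rw [← Matrix.mulVec_mulVec]
      have hfixv : Pc.mulVec (Pc.mulVec v) = Pc.mulVec v := by
        rw [Matrix.mulVec_mulVec, hPc2]
      exact (hPceig (Pc.mulVec v)).mp hfixv k
    have hPcS : Pc * S k = Pc := by
      have h := congrArg conjTranspose hSPc
      rwa [conjTranspose_mul, hPcH.eq, (hSH k).eq] at h
    have hSρ : S k * ρ = ρ := by
      conv_lhs => rw [← hsupp]
      rw [← mul_assoc, ← mul_assoc, hSPc, hsupp]
    have hρS : ρ * S k = ρ := by
      conv_lhs => rw [← hsupp]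
      rw [mul_assoc, hPcS, hsupp]
    have h2 : ∀ X : Matrix (Fin N) (Fin N) ℂ, (2:ℂ)⁻¹ • (X + X) = X := by
      intro X
      rw [← two_smul ℂ X, smul_smul]
      norm_num
    have hAplρ : Apl (S k) * ρ = ρ := by
      rw [Apl, Matrix.smul_mul, add_mul, one_mul, hSρ, h2]
    have hAplH : (Apl (S k))ᴴ = Apl (S k) := by
      simp [Apl, conjTranspose_smul, conjTranspose_add, (hSH k).eq]
    have hρApl : ρ * Apl (S k) = ρ := by
      rw [Apl, Matrix.mul_smul, mul_add, mul_one, hρS, h2]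
    have hAmiρ : Ami (C k) (S k) * ρ = 0 := by
      rw [Ami, mul_assoc, Matrix.smul_mul, sub_mul, one_mul, hSρ, sub_self,
        smul_zero, mul_zero]
    rw [encMap, hAmiρ, Matrix.zero_mul, add_zero, hAplρ, hAplH, hρApl]
end
end

section
/- Work on n qubits, H_P = (ℂ²)^{⊗n}, viewed as H_up ⊗ H_g with H_up = (ℂ²)^{⊗(n−r)} (the first n−r 'upload' qubits) and H_g = (ℂ²)^{⊗r} (the remaining 'gauge' qubits). Let S_1, …, S_r be pairwise commuting Hermitian unitary operators on H_P with S_k² = 1, and C_1, …, C_r unitary operators on H_P with C_k S_k = −S_k C_k and C_k S_j = S_j C_k for j ≠ k; define Φ_k(ρ) = A_{+,k} ρ A_{+,k}* + A_{−,k} ρ A_{−,k}* with A_{+,k} = (1+S_k)/2, A_{−,k} = C_k(1−S_k)/2, and let Φ_P = Φ_r ∘ ⋯ ∘ Φ_1. For each pair of bit strings p, q ∈ {0,1}^{n−r}, suppose given an operator R_{p,q} on H_g such that the operator M_{p,q} := m_{p,q} ⊗ R_{p,q}, where m_{p,q} := ⊗_{ℓ=1}^{n−r} X^{p_ℓ}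 Z^{q_ℓ}, commutes with every S_k and with every C_k. Then for every density operator ρ_L on H_up and every density operator σ on H_g: (i) Φ_P(ρ_L ⊗ σ) is supported on the joint +1-eigenspace of S_1, …, S_r; and (ii) the equalities tr( M_{p,q} Φ_P(ρ_L ⊗ σ) ) = tr( m_{p,q} ρ_L ) hold for all p, q and all density operators ρ_L if and only if tr( R_{p,q} σ ) = 1 for all p, q. -/
open Matrix Kronecker
open scoped ComplexOrder

noncomputable section
set_option linter.unusedSectionVars false
set_option linter.unusedVariables false


/-- Pauli `X`. -/
def Xm : Matrix (Fin 2) (Fin 2) ℂ := !![0, 1; 1, 0]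

/-- Pauli `Z`. -/
def Zm : Matrix (Fin 2) (Fin 2) ℂ := !![1, 0; 0, -1]

/-- The Pauli string `m_{p,q} = ⊗_ℓ X^{p_ℓ} Z^{q_ℓ}` on `u` qubits. -/
def mString (u : ℕ) (p q : Fin u → Fin 2) :
    Matrix (Fin u → Fin 2) (Fin u → Fin 2) ℂ :=
  Matrix.of fun a b => ∏ ℓ, ((Xm ^ (p ℓ : ℕ)) * (Zm ^ (q ℓ : ℕ))) (a ℓ) (b ℓ)

variable {d : Type*} [Fintype d] [DecidableEq d]

def Bmi (S : Matrix d d ℂ) : Matrix d d ℂ := (2:ℂ)⁻¹ • (1 - S)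

lemma Ami_eq (C S : Matrix d d ℂ) : Ami C S = C * Bmi S := rfl

lemma Apl_herm {S : Matrix d d ℂ} (hSH : S.IsHermitian) : (Apl S)ᴴ = Apl S := by
  simp [Apl, conjTranspose_smul, hSH.eq]

lemma Bmi_herm {S : Matrix d d ℂ} (hSH : S.IsHermitian) : (Bmi S)ᴴ = Bmi S := by
  simp [Bmi, conjTranspose_smul, hSH.eq, sub_eq_add_neg]

lemma Ami_herm {C S : Matrix d d ℂ} (hSH : S.IsHermitian) :
    (Ami C S)ᴴ = Bmi S * Cᴴ := by
  rw [Ami_eq, conjTranspose_mul, Bmi_herm hSH]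

lemma Apl_proj {S : Matrix d d ℂ} (hS2 : S * S = 1) : Apl S * Apl S = Apl S := by
  have h : (1 + S) * (1 + S) = (2:ℂ) • (1 + S) := by
    simp only [two_smul, mul_add, add_mul, one_mul, mul_one, hS2]; abel
  simp only [Apl, smul_mul_smul_comm, h, smul_smul]
  norm_num

lemma Bmi_proj {S : Matrix d d ℂ} (hS2 : S * S = 1) : Bmi S * Bmi S = Bmi S := by
  have h : (1 - S) * (1 - S) = (2:ℂ) • (1 - S) := by
    simp only [two_smul, mul_sub, sub_mul, one_mul, mul_one, hS2]; abel
  simp only [Bmi, smul_mul_smul_comm, h, smul_smul]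
  norm_num

lemma Apl_add_Bmi (S : Matrix d d ℂ) : Apl S + Bmi S = 1 := by
  simp only [Apl, Bmi, ← smul_add]
  rw [show (1 + S) + (1 - S) = (2:ℂ) • (1 : Matrix d d ℂ) by rw [two_smul]; abel,
    smul_smul]
  norm_num

lemma S_mul_Apl {S : Matrix d d ℂ} (hS2 : S * S = 1) : S * Apl S = Apl S := by
  simp only [Apl, Matrix.mul_smul, mul_add, mul_one, hS2]
  rw [add_comm]

lemma Apl_mul_S {S : Matrix d d ℂ} (hS2 : S * S = 1) : Apl S * S = Apl S := by
  simp only [Apl, Matrix.smul_mul, add_mul, one_mul, hS2]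
  rw [add_comm]

lemma comm_Apl {M S : Matrix d d ℂ} (h : M * S = S * M) : M * Apl S = Apl S * M := by
  simp only [Apl, Matrix.mul_smul, Matrix.smul_mul, mul_add, add_mul, mul_one, one_mul, h]

lemma comm_Bmi {M S : Matrix d d ℂ} (h : M * S = S * M) : M * Bmi S = Bmi S * M := by
  simp only [Bmi, Matrix.mul_smul, Matrix.smul_mul, mul_sub, sub_mul, mul_one, one_mul, h]

lemma S_mul_Bmi {S : Matrix d d ℂ} (hS2 : S * S = 1) : S * Bmi S = -Bmi S := by
  simp only [Bmi, Matrix.mul_smul, mul_sub, mul_one, hS2]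
  rw [show S - (1:Matrix d d ℂ) = -(1 - S) from (neg_sub _ _).symm, smul_neg]

lemma Bmi_mul_S {S : Matrix d d ℂ} (hS2 : S * S = 1) : Bmi S * S = -Bmi S := by
  simp only [Bmi, Matrix.smul_mul, sub_mul, one_mul, hS2]
  rw [show S - (1:Matrix d d ℂ) = -(1 - S) from (neg_sub _ _).symm, smul_neg]

lemma S_mul_Ami {S C : Matrix d d ℂ} (hS2 : S * S = 1) (hCS : C * S = -(S * C)) :
    S * Ami C S = Ami C S := by
  have hSC : S * C = -(C * S) := by rw [hCS, neg_neg]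
  rw [Ami_eq, ← mul_assoc, hSC, neg_mul, mul_assoc, S_mul_Bmi hS2, mul_neg, neg_neg]

lemma Cconj_S {S C : Matrix d d ℂ} (hSH : S.IsHermitian) (hCS : C * S = -(S * C)) :
    Cᴴ * S = -(S * Cᴴ) := by
  have := congrArg conjTranspose hCS
  simp only [conjTranspose_mul, conjTranspose_neg, hSH.eq] at this
  rw [this, neg_neg]

lemma AmiH_mul_S {S C : Matrix d d ℂ} (hSH : S.IsHermitian) (hS2 : S * S = 1)
    (hCS : C * S = -(S * C)) : (Ami C S)ᴴ * S = (Ami C S)ᴴ := by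
  rw [Ami_herm hSH, mul_assoc, Cconj_S hSH hCS, mul_neg, ← mul_assoc, Bmi_mul_S hS2,
    neg_mul, neg_neg]

lemma Cconj_comm {T C : Matrix d d ℂ} (hTH : T.IsHermitian) (hTC : T * C = C * T) :
    T * Cᴴ = Cᴴ * T := by
  have := congrArg conjTranspose hTC
  simpa only [conjTranspose_mul, hTH.eq] using this.symm

lemma sandwich_comm {T A B ρ : Matrix d d ℂ} (hA : T * A = A * T) (hB : T * B = B * T)
    (h1 : T * ρ = ρ) (h2 : ρ * T = ρ) :
    T * (A * ρ * B) = A * ρ * B ∧ (A * ρ * B) * T = A * ρ * B := by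
  constructor
  · calc T * (A * ρ * B) = (T * A) * ρ * B := by simp only [mul_assoc]
    _ = A * (T * ρ) * B := by rw [hA]; simp only [mul_assoc]
    _ = A * ρ * B := by rw [h1]
  · calc (A * ρ * B) * T = A * (ρ * (B * T)) := by simp only [mul_assoc]
    _ = A * ((ρ * T) * B) := by rw [← hB]; simp only [mul_assoc]
    _ = A * ρ * B := by rw [h2]; simp only [mul_assoc]

lemma estab {S C : Matrix d d ℂ} (hSH : S.IsHermitian) (hS2 : S * S = 1)
    (hCS : C * S = -(S * C)) (ρ : Matrix d d ℂ) :
    S * encMap S C ρ = encMap S C ρ ∧ encMap S C ρ * S = encMap S C ρ := by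
  have l1 : S * (Apl S * ρ * (Apl S)ᴴ) = Apl S * ρ * (Apl S)ᴴ := by
    simp only [← mul_assoc, S_mul_Apl hS2]
  have l2 : S * (Ami C S * ρ * (Ami C S)ᴴ) = Ami C S * ρ * (Ami C S)ᴴ := by
    simp only [← mul_assoc, S_mul_Ami hS2 hCS]
  have r1 : (Apl S * ρ * (Apl S)ᴴ) * S = Apl S * ρ * (Apl S)ᴴ := by
    rw [mul_assoc, Apl_herm hSH, Apl_mul_S hS2]
  have r2 : (Ami C S * ρ * (Ami C S)ᴴ) * S = Ami C S * ρ * (Ami C S)ᴴ := by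
    rw [mul_assoc, AmiH_mul_S hSH hS2 hCS]
  constructor
  · rw [encMap, mul_add, l1, l2]
  · rw [encMap, add_mul, r1, r2]

lemma preserve {S C T : Matrix d d ℂ} (hSH : S.IsHermitian) (hTH : T.IsHermitian)
    (hTS : T * S = S * T) (hTC : T * C = C * T) {ρ : Matrix d d ℂ}
    (h1 : T * ρ = ρ) (h2 : ρ * T = ρ) :
    T * encMap S C ρ = encMap S C ρ ∧ encMap S C ρ * T = encMap S C ρ := by
  have hA1 : T * Apl S = Apl S * T := comm_Apl hTS
  have hA2 : T * Ami C S = Ami C S * T := by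
    rw [Ami_eq, ← mul_assoc, hTC, mul_assoc, comm_Bmi hTS, ← mul_assoc]
  have hA1' : T * (Apl S)ᴴ = (Apl S)ᴴ * T := by rw [Apl_herm hSH]; exact hA1
  have hA2' : T * (Ami C S)ᴴ = (Ami C S)ᴴ * T := by
    rw [Ami_herm hSH, ← mul_assoc, comm_Bmi hTS, mul_assoc, Cconj_comm hTH hTC,
      ← mul_assoc]
  obtain ⟨p1, q1⟩ := sandwich_comm hA1 hA1' h1 h2
  obtain ⟨p2, q2⟩ := sandwich_comm hA2 hA2' h1 h2
  constructor
  · rw [encMap, mul_add, p1, p2]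
  · rw [encMap, add_mul, q1, q2]

lemma trace_step {S C M ρ : Matrix d d ℂ} (hSH : S.IsHermitian) (hS2 : S * S = 1)
    (hCU : Cᴴ * C = 1) (hMS : M * S = S * M) (hMC : M * C = C * M) :
    (M * encMap S C ρ).trace = (M * ρ).trace := by
  have e1 : (Apl S)ᴴ * M * Apl S = M * Apl S := by
    rw [Apl_herm hSH, ← comm_Apl hMS, mul_assoc, Apl_proj hS2]
  have h1 : Cᴴ * M * C = M := by rw [mul_assoc, hMC, ← mul_assoc, hCU, one_mul]
  have e2 : (Ami C S)ᴴ * M * Ami C S = M * Bmi S := by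
    rw [Ami_herm hSH, Ami_eq]
    calc Bmi S * Cᴴ * M * (C * Bmi S) = Bmi S * (Cᴴ * M * C) * Bmi S := by
          simp only [mul_assoc]
      _ = M * Bmi S := by rw [h1, ← comm_Bmi hMS, mul_assoc, Bmi_proj hS2]
  have t1 : (M * (Apl S * ρ * (Apl S)ᴴ)).trace = (M * Apl S * ρ).trace := by
    rw [show M * (Apl S * ρ * (Apl S)ᴴ) = (M * Apl S * ρ) * (Apl S)ᴴ by
        simp only [mul_assoc], trace_mul_comm,
      show (Apl S)ᴴ * (M * Apl S * ρ) = ((Apl S)ᴴ * M * Apl S) * ρ by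
        simp only [mul_assoc], e1]
  have t2 : (M * (Ami C S * ρ * (Ami C S)ᴴ)).trace = (M * Bmi S * ρ).trace := by
    rw [show M * (Ami C S * ρ * (Ami C S)ᴴ) = (M * Ami C S * ρ) * (Ami C S)ᴴ by
        simp only [mul_assoc], trace_mul_comm,
      show (Ami C S)ᴴ * (M * Ami C S * ρ) = ((Ami C S)ᴴ * M * Ami C S) * ρ by
        simp only [mul_assoc], e2]
  rw [encMap, mul_add, trace_add, t1, t2, ← trace_add, ← add_mul, ← mul_add,
    Apl_add_Bmi, mul_one]

section Fold
variable {ι : Type*} {S C : ι → Matrix d d ℂ}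

lemma step_cond (hSH : ∀ k, (S k).IsHermitian) (hS2 : ∀ k, S k * S k = 1)
    (hScomm : ∀ k j, S k * S j = S j * S k)
    (hCS : ∀ k, C k * S k = -(S k * C k))
    (hCSj : ∀ k j, j ≠ k → C k * S j = S j * C k)
    (j k : ι) (Y : Matrix d d ℂ) (h : S k * Y = Y ∧ Y * S k = Y) :
    S k * encMap (S j) (C j) Y = encMap (S j) (C j) Y ∧
    encMap (S j) (C j) Y * S k = encMap (S j) (C j) Y := by
  by_cases hjk : j = k
  · subst hjk; exact estab (hSH j) (hS2 j) (hCS j) Y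
  · exact preserve (hSH j) (hSH k) (hScomm k j)
      ((hCSj j k (Ne.symm hjk)).symm) h.1 h.2

lemma fold_cond_pres (hSH : ∀ k, (S k).IsHermitian) (hS2 : ∀ k, S k * S k = 1)
    (hScomm : ∀ k j, S k * S j = S j * S k)
    (hCS : ∀ k, C k * S k = -(S k * C k))
    (hCSj : ∀ k j, j ≠ k → C k * S j = S j * C k)
    (l : List ι) (k : ι) (Y : Matrix d d ℂ) (h : S k * Y = Y ∧ Y * S k = Y) :
    S k * seqApply (l.map fun j => encMap (S j) (C j)) Y
      = seqApply (l.map fun j => encMap (S j) (C j)) Y ∧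
    seqApply (l.map fun j => encMap (S j) (C j)) Y * S k
      = seqApply (l.map fun j => encMap (S j) (C j)) Y := by
  induction l generalizing Y with
  | nil => exact h
  | cons j l ih =>
    exact ih _ (step_cond hSH hS2 hScomm hCS hCSj j k Y h)

lemma fold_cond (hSH : ∀ k, (S k).IsHermitian) (hS2 : ∀ k, S k * S k = 1)
    (hScomm : ∀ k j, S k * S j = S j * S k)
    (hCS : ∀ k, C k * S k = -(S k * C k))
    (hCSj : ∀ k j, j ≠ k → C k * S j = S j * C k)
    (l : List ι) (k : ι) (Y : Matrix d d ℂ) (hk : k ∈ l) :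
    S k * seqApply (l.map fun j => encMap (S j) (C j)) Y
      = seqApply (l.map fun j => encMap (S j) (C j)) Y ∧
    seqApply (l.map fun j => encMap (S j) (C j)) Y * S k
      = seqApply (l.map fun j => encMap (S j) (C j)) Y := by
  induction l generalizing Y with
  | nil => simp at hk
  | cons j l ih =>
    rcases List.mem_cons.mp hk with hjk | hk'
    · subst hjk
      exact fold_cond_pres hSH hS2 hScomm hCS hCSj l k _
        (estab (hSH k) (hS2 k) (hCS k) Y)
    · exact ih _ hk'

lemma fold_trace (hSH : ∀ k, (S k).IsHermitian) (hS2 : ∀ k, S k * S k = 1)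
    (hCU : ∀ k, (C k)ᴴ * C k = 1) {M : Matrix d d ℂ}
    (hMS : ∀ k, M * S k = S k * M) (hMC : ∀ k, M * C k = C k * M)
    (l : List ι) (Y : Matrix d d ℂ) :
    (M * seqApply (l.map fun j => encMap (S j) (C j)) Y).trace = (M * Y).trace := by
  induction l generalizing Y with
  | nil => rfl
  | cons j l ih =>
    exact (ih _).trans (trace_step (hSH j) (hS2 j) (hCU j) (hMS j) (hMC j))

end Fold

lemma Pc_mul_eq {ι : Type*} {S : ι → Matrix d d ℂ} {Pc X : Matrix d d ℂ}
    (hPceig : ∀ ψ, Pc.mulVec ψ = ψ ↔ ∀ k, (S k).mulVec ψ = ψ)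
    (h : ∀ k, S k * X = X) : Pc * X = X := by
  ext i j
  have hc : Pc.mulVec (fun i => X i j) = (fun i => X i j) := by
    rw [hPceig]
    intro k; funext i'
    simpa [Matrix.mulVec, Matrix.mul_apply, dotProduct] using
      congrFun (congrFun (h k) i') j
  simpa [Matrix.mulVec, Matrix.mul_apply, dotProduct] using congrFun hc i


def sq2 : ℂ := (Real.sqrt 2 : ℂ)⁻¹

lemma sq2_conj : (starRingEnd ℂ) sq2 = sq2 := by
  simp [sq2, map_inv₀, Complex.conj_ofReal]

lemma sq2_sq : sq2 * sq2 = 2⁻¹ := by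
  rw [sq2, ← mul_inv, ← Complex.ofReal_mul, Real.mul_self_sqrt (by norm_num)]
  norm_num

def wv (a b : Fin 2) : Fin 2 → ℂ :=
  if a = 0 then ![1, 0]
  else if b = 0 then ![sq2, sq2]
  else ![sq2, Complex.I * sq2]

lemma I_sq2_mul : Complex.I * sq2 * ((starRingEnd ℂ) (Complex.I * sq2)) = 2⁻¹ := by
  rw [_root_.map_mul, sq2_conj, Complex.conj_I,
    show Complex.I * sq2 * (-Complex.I * sq2) = -(Complex.I * Complex.I) * (sq2 * sq2) by
      ring, Complex.I_mul_I, sq2_sq]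
  norm_num

lemma wv_norm (a b : Fin 2) :
    ∑ v, wv a b v * (starRingEnd ℂ) (wv a b v) = 1 := by
  fin_cases a <;> fin_cases b <;>
    simp [wv, Fin.sum_univ_two, sq2_conj, sq2_sq, I_sq2_mul, Complex.conj_I]
  · norm_num
  · rw [show Complex.I * sq2 * (Complex.I * sq2)
        = Complex.I * Complex.I * (sq2 * sq2) by ring, Complex.I_mul_I, sq2_sq]
    norm_num

lemma wv_val_ne (a b : Fin 2) :
    (∑ x, ∑ y, ((Xm ^ (a:ℕ)) * (Zm ^ (b:ℕ))) x y *
      (wv a b y * (starRingEnd ℂ) (wv a b x))) ≠ 0 := by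
  fin_cases a <;> fin_cases b <;>
    simp [wv, Xm, Zm, Fin.sum_univ_two, sq2_conj, sq2_sq, I_sq2_mul, Complex.conj_I,
      Matrix.mul_fin_two, Matrix.one_apply]
  rw [show -(Complex.I * sq2 * sq2) + -(sq2 * (Complex.I * sq2))
      = -((Complex.I + Complex.I) * (sq2 * sq2)) by ring, sq2_sq]
  norm_num [Complex.ext_iff]

lemma trace_mul_expand {m : Type*} [Fintype m] (A B : Matrix m m ℂ) :
    (A * B).trace = ∑ x, ∑ y, A x y * B y x := by
  simp [Matrix.trace, Matrix.diag, Matrix.mul_apply]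

lemma key_sum (u : ℕ) (G : Fin u → Fin 2 → ℂ) :
    ∑ x : Fin u → Fin 2, ∏ ℓ, G ℓ (x ℓ) = ∏ ℓ, ∑ v, G ℓ v := by
  rw [Finset.prod_univ_sum, Fintype.piFinset_univ]

lemma good_state (u : ℕ) (p q : Fin u → Fin 2) :
    ∃ ρL, IsDensity ρL ∧ (mString u p q * ρL).trace ≠ 0 := by
  classical
  set Ψ : (Fin u → Fin 2) → ℂ := fun x => ∏ ℓ, wv (p ℓ) (q ℓ) (x ℓ) with hΨ
  refine ⟨Matrix.of fun x y => Ψ x * (starRingEnd ℂ) (Ψ y), ⟨⟨?_, ?_⟩, ?_⟩, ?_⟩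
  · ext i j
    simp [Matrix.conjTranspose_apply, mul_comm]
  · intro x
    have h1 : star x ⬝ᵥ (Matrix.of fun x y => Ψ x * (starRingEnd ℂ) (Ψ y)).mulVec x
        = (∑ i, star (x i) * Ψ i) * (∑ j, (starRingEnd ℂ) (Ψ j) * x j) := by
      rw [Finset.sum_mul_sum]
      simp only [dotProduct, Matrix.mulVec, Matrix.of_apply, Pi.star_apply,
        Finset.mul_sum]
      exact Finset.sum_congr rfl fun i _ => Finset.sum_congr rfl fun j _ => by ring
    have h2 : (∑ i, star (x i) * Ψ i)
        = star (∑ j, (starRingEnd ℂ) (Ψ j) * x j) := by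
      simp only [star_sum, star_mul', RCLike.star_def, Complex.conj_conj]
      exact Finset.sum_congr rfl fun i _ => mul_comm _ _
    have h0 : (x.sum fun i xi => x.sum fun j xj =>
        star xi * (Matrix.of fun x y => Ψ x * (starRingEnd ℂ) (Ψ y)) i j * xj)
        = star ⇑x ⬝ᵥ (Matrix.of fun x y => Ψ x * (starRingEnd ℂ) (Ψ y)).mulVec ⇑x := by
      simp [dotProduct, Matrix.mulVec, Finsupp.sum_fintype, Finset.mul_sum, mul_assoc]
    rw [h0, h1, h2]
    exact star_mul_self_nonneg _
  · have hterm : ∀ x, Ψ x * (starRingEnd ℂ) (Ψ x)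
        = ∏ ℓ, (wv (p ℓ) (q ℓ) (x ℓ) * (starRingEnd ℂ) (wv (p ℓ) (q ℓ) (x ℓ))) := by
      intro x
      rw [hΨ, map_prod, Finset.prod_mul_distrib]
    simp only [Matrix.trace, Matrix.diag, Matrix.of_apply, hterm]
    rw [key_sum u (fun ℓ v => wv (p ℓ) (q ℓ) v * (starRingEnd ℂ) (wv (p ℓ) (q ℓ) v))]
    exact Finset.prod_eq_one fun ℓ _ => wv_norm _ _
  · have hterm : ∀ x y : Fin u → Fin 2,
        (∏ ℓ, ((Xm ^ (p ℓ : ℕ)) * (Zm ^ (q ℓ : ℕ))) (x ℓ) (y ℓ)) *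
          (Ψ y * (starRingEnd ℂ) (Ψ x))
        = ∏ ℓ, (((Xm ^ (p ℓ : ℕ)) * (Zm ^ (q ℓ : ℕ))) (x ℓ) (y ℓ) *
            (wv (p ℓ) (q ℓ) (y ℓ) * (starRingEnd ℂ) (wv (p ℓ) (q ℓ) (x ℓ)))) := by
      intro x y
      rw [hΨ, map_prod, ← Finset.prod_mul_distrib, ← Finset.prod_mul_distrib]
    have expand : (mString u p q *
          Matrix.of fun x y => Ψ x * (starRingEnd ℂ) (Ψ y)).trace
        = ∏ ℓ, ∑ x0, ∑ y0, ((Xm ^ (p ℓ : ℕ)) * (Zm ^ (q ℓ : ℕ))) x0 y0 *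
            (wv (p ℓ) (q ℓ) y0 * (starRingEnd ℂ) (wv (p ℓ) (q ℓ) x0)) := by
      rw [trace_mul_expand]
      simp only [mString, Matrix.of_apply]
      simp only [hterm]
      rw [show (∑ x : Fin u → Fin 2, ∑ y : Fin u → Fin 2,
          ∏ ℓ, (((Xm ^ (p ℓ : ℕ)) * (Zm ^ (q ℓ : ℕ))) (x ℓ) (y ℓ) *
            (wv (p ℓ) (q ℓ) (y ℓ) * (starRingEnd ℂ) (wv (p ℓ) (q ℓ) (x ℓ)))))
          = ∑ x : Fin u → Fin 2, ∏ ℓ, ∑ y0,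
              (((Xm ^ (p ℓ : ℕ)) * (Zm ^ (q ℓ : ℕ))) (x ℓ) y0 *
            (wv (p ℓ) (q ℓ) y0 * (starRingEnd ℂ) (wv (p ℓ) (q ℓ) (x ℓ)))) from
          Finset.sum_congr rfl fun x _ => key_sum u
            (fun ℓ v => ((Xm ^ (p ℓ : ℕ)) * (Zm ^ (q ℓ : ℕ))) (x ℓ) v *
              (wv (p ℓ) (q ℓ) v * (starRingEnd ℂ) (wv (p ℓ) (q ℓ) (x ℓ)))),
        key_sum u (fun ℓ w => ∑ y0, (((Xm ^ (p ℓ : ℕ)) * (Zm ^ (q ℓ : ℕ))) w y0 *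
            (wv (p ℓ) (q ℓ) y0 * (starRingEnd ℂ) (wv (p ℓ) (q ℓ) w))))]
    rw [expand]
    exact Finset.prod_ne_zero_iff.mpr fun ℓ _ => wv_val_ne _ _


/-- the composed dissipative map `Φ_P = Φ_r ∘ ⋯ ∘ Φ_1` prepares the
code subspace, and encodes the logical operators correctly exactly on the gauge
states `σ` with `tr(R_{p,q} σ) = 1` for all `p, q`. -/
theorem stmt5 (n r : ℕ) (hrn : r ≤ n)
    (S C : Fin r → Matrix ((Fin (n-r) → Fin 2) × (Fin r → Fin 2))
      ((Fin (n-r) → Fin 2) × (Fin r → Fin 2)) ℂ)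
    (R : (Fin (n-r) → Fin 2) → (Fin (n-r) → Fin 2) →
      Matrix (Fin r → Fin 2) (Fin r → Fin 2) ℂ)
    (hSH : ∀ k, (S k).IsHermitian)
    (hS2 : ∀ k, S k * S k = 1)
    (hScomm : ∀ k j, S k * S j = S j * S k)
    (hCU : ∀ k, (C k)ᴴ * C k = 1 ∧ C k * (C k)ᴴ = 1)
    (hCS : ∀ k, C k * S k = -(S k * C k))
    (hCSj : ∀ k j, j ≠ k → C k * S j = S j * C k)
    (hMS : ∀ p q k, (mString (n-r) p q ⊗ₖ R p q) * S k = S k * (mString (n-r) p q ⊗ₖ R p q))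
    (hMC : ∀ p q k, (mString (n-r) p q ⊗ₖ R p q) * C k = C k * (mString (n-r) p q ⊗ₖ R p q))
    (Pc : Matrix ((Fin (n-r) → Fin 2) × (Fin r → Fin 2))
      ((Fin (n-r) → Fin 2) × (Fin r → Fin 2)) ℂ)
    (hPcH : Pc.IsHermitian) (hPc2 : Pc * Pc = Pc)
    (hPceig : ∀ ψ, Pc.mulVec ψ = ψ ↔ ∀ k, (S k).mulVec ψ = ψ) :
    (∀ (ρL : Matrix (Fin (n-r) → Fin 2) (Fin (n-r) → Fin 2) ℂ)
       (σ : Matrix (Fin r → Fin 2) (Fin r → Fin 2) ℂ),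
      IsDensity ρL → IsDensity σ →
      Pc * seqApply (List.ofFn fun k => encMap (S k) (C k)) (ρL ⊗ₖ σ) * Pc
        = seqApply (List.ofFn fun k => encMap (S k) (C k)) (ρL ⊗ₖ σ)) ∧
    (∀ σ : Matrix (Fin r → Fin 2) (Fin r → Fin 2) ℂ, IsDensity σ →
      ((∀ p q, ∀ ρL : Matrix (Fin (n-r) → Fin 2) (Fin (n-r) → Fin 2) ℂ, IsDensity ρL →
          ((mString (n-r) p q ⊗ₖ R p q) *
            seqApply (List.ofFn fun k => encMap (S k) (C k)) (ρL ⊗ₖ σ)).trace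
          = (mString (n-r) p q * ρL).trace)
        ↔ (∀ p q, (R p q * σ).trace = 1))) := by
  classical
  constructor
  · intro ρL σ _ _
    set X := seqApply (List.ofFn fun k => encMap (S k) (C k)) (ρL ⊗ₖ σ) with hX
    have hfix : ∀ k, S k * X = X ∧ X * S k = X := by
      intro k
      rw [hX, List.ofFn_eq_map]
      exact fold_cond hSH hS2 hScomm hCS hCSj (List.finRange r) k _ (List.mem_finRange k)
    have hPX : Pc * X = X := Pc_mul_eq hPceig fun k => (hfix k).1
    have hXHfix : ∀ k, S k * Xᴴ = Xᴴ := by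
      intro k
      have h := congrArg conjTranspose (hfix k).2
      rwa [conjTranspose_mul, (hSH k).eq] at h
    have hPXH : Pc * Xᴴ = Xᴴ := Pc_mul_eq hPceig hXHfix
    have hXP : X * Pc = X := by
      have h := congrArg conjTranspose hPXH
      rwa [conjTranspose_mul, hPcH.eq, conjTranspose_conjTranspose] at h
    rw [hPX, hXP]
  · intro σ hσ
    have key : ∀ p q (ρL : Matrix (Fin (n-r) → Fin 2) (Fin (n-r) → Fin 2) ℂ),
        ((mString (n-r) p q ⊗ₖ R p q) *
          seqApply (List.ofFn fun k => encMap (S k) (C k)) (ρL ⊗ₖ σ)).trace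
        = (mString (n-r) p q * ρL).trace * (R p q * σ).trace := by
      intro p q ρL
      rw [List.ofFn_eq_map,
        fold_trace hSH hS2 (fun k => (hCU k).1) (hMS p q) (hMC p q) (List.finRange r),
        ← Matrix.mul_kronecker_mul, Matrix.trace_kronecker]
    constructor
    · intro H p q
      obtain ⟨ρL, hρL, hne⟩ := good_state (n-r) p q
      have h := H p q ρL hρL
      rw [key] at h
      exact mul_left_cancel₀ hne (h.trans (mul_one _).symm)
    · intro hR p q ρL _
      rw [key, hR, mul_one]
end
end

section
/- Let n ≥ r ≥ 1 and let S ∈ Matrix (Fin r) (Fin (2n)) (ZMod 2) have linearly independent rows and satisfy S Λ Sᵀ = 0, where Λ is the 2n×2n symplectic form over ZMod 2. Then there exist a permutation π of the n qubits (acting simultaneously on the X-columns 1..n and the Z-columns n+1..2n of check matrices), matrices G_z, G_x ∈ Matrix (Fin (n−r)) (Fin (2n)) (ZMod 2), and vectors x_1, …, x_r ∈ (ZMod 2)^{2n}, such that, after relabeling qubits by π: (i) S Λ G_zᵀ = 0 and S Λ G_xᵀ = 0; (ii) G_z Λ G_zᵀ = 0, G_x Λ G_xᵀ = 0, and G_z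 Λ G_xᵀ = I_{n−r}; (iii) the X-part of G_z is zero and the Z-part of G_z restricted to the first n−r qubit columns is I_{n−r}, while the Z-part of G_x restricted to the first n−r qubit columns is zero and the X-part of G_x restricted to the first n−r qubit columns is I_{n−r}; and (iv) the stacked (2n−r)×2n matrix S̄ = [S; G_z; G_x] has linearly independent rows and satisfies S̄ Λ x_i = e_i for every i = 1, …, r, where e_i is the i-th standard basis vector of (ZMod 2)^{2n−r}. -/
open Matrix

noncomputable section

/-- The symplectic form over `ZMod 2`. -/
def Lam (n : ℕ) : Matrix (Fin n ⊕ Fin n) (Fin n ⊕ Fin n) (ZMod 2) :=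
  Matrix.fromBlocks 0 1 1 0

namespace Stmt6Aux

variable {n : ℕ}

def sw {n : ℕ} : (Fin n ⊕ Fin n) → (Fin n ⊕ Fin n) := Sum.elim Sum.inr Sum.inl

def om {n : ℕ} (v w : (Fin n ⊕ Fin n) → ZMod 2) : ZMod 2 := ∑ c, v c * w (sw c)

lemma om_eq (v w : (Fin n ⊕ Fin n) → ZMod 2) :
    om v w = (∑ j, v (.inl j) * w (.inr j)) + ∑ j, v (.inr j) * w (.inl j) := by
  rw [om, Fintype.sum_sum_type]; rfl

lemma om_comm (v w : (Fin n ⊕ Fin n) → ZMod 2) : om v w = om w v := by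
  rw [om_eq, om_eq, add_comm]
  congr 1 <;> exact Finset.sum_congr rfl fun _ _ => mul_comm _ _

lemma lam_mulVec (w : (Fin n ⊕ Fin n) → ZMod 2) : (Lam n).mulVec w = w ∘ sw := by
  funext c
  cases c with
  | inl j =>
      simp [Lam, Matrix.mulVec, dotProduct, Fintype.sum_sum_type, Matrix.one_apply, sw,
        ite_mul]
  | inr j =>
      simp [Lam, Matrix.mulVec, dotProduct, Fintype.sum_sum_type, Matrix.one_apply, sw,
        ite_mul]

lemma om_eq_dot (v w : (Fin n ⊕ Fin n) → ZMod 2) : om v w = v ⬝ᵥ (Lam n).mulVec w := by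
  rw [lam_mulVec]; rfl

lemma mul_lam_mul_apply {α β : Type*} [Fintype α] [Fintype β]
    (A : Matrix α (Fin n ⊕ Fin n) (ZMod 2)) (B : Matrix β (Fin n ⊕ Fin n) (ZMod 2))
    (a : α) (b : β) : (A * Lam n * Bᵀ) a b = om (A a) (B b) := by
  rw [Matrix.mul_assoc, Matrix.mul_apply, om_eq_dot, dotProduct]
  refine Finset.sum_congr rfl fun c _ => ?_
  rw [Matrix.mul_apply]
  rfl

lemma om_sum_left {ι : Type*} [Fintype ι] (g : ι → ZMod 2)
    (v : ι → (Fin n ⊕ Fin n) → ZMod 2) (w : (Fin n ⊕ Fin n) → ZMod 2) :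
    om (∑ i, g i • v i) w = ∑ i, g i * om (v i) w := by
  simp only [om, Finset.sum_apply, Pi.smul_apply, smul_eq_mul, Finset.sum_mul,
    Finset.mul_sum, mul_assoc]
  exact Finset.sum_comm

lemma om_zero_left (w : (Fin n ⊕ Fin n) → ZMod 2) : om 0 w = 0 := by
  simp [om]

lemma lam_mul_lam : Lam n * Lam n = 1 := by
  rw [Lam, Matrix.fromBlocks_multiply]
  simp

lemma key_surj {ι κ : Type*} [Fintype ι] [Fintype κ] [DecidableEq ι]
    (M : Matrix ι κ (ZMod 2))
    (h : ∀ ψ : ι → ZMod 2, ψ ᵥ* M = 0 → ψ = 0) : Function.Surjective M.mulVecLin := by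
  rw [← LinearMap.range_eq_top]
  apply Submodule.eq_top_of_finrank_eq
  have hker : LinearMap.ker (Mᵀ.mulVecLin) = ⊥ := by
    rw [LinearMap.ker_eq_bot']
    intro ψ hψ
    exact h ψ (by rwa [Matrix.mulVecLin_apply, Matrix.mulVec_transpose] at hψ)
  have h1 : Module.finrank (ZMod 2) (LinearMap.range M.mulVecLin) = M.rank := rfl
  have h2 : Module.finrank (ZMod 2) (LinearMap.range Mᵀ.mulVecLin) = Mᵀ.rank := rfl
  have h3 := LinearMap.finrank_range_add_finrank_ker (Mᵀ.mulVecLin)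
  rw [hker, finrank_bot, add_zero, h2] at h3
  rw [h1, ← Matrix.rank_transpose, h3]

lemma zmod2_ne_zero {x : ZMod 2} (h : x ≠ 0) : x = 1 := by
  revert h; revert x; decide

lemma add_self (x : ZMod 2) : x + x = 0 := by
  revert x; decide

end Stmt6Aux

open Stmt6Aux Submodule

set_option maxHeartbeats 2000000 in
/-- existence of canonical logical operators and correction
operators for a stabilizer check matrix (after a suitable relabeling of the
qubits).  Check matrices are indexed by `Fin n ⊕ Fin n` (X-part ⊕ Z-part). -/
theorem stmt6 (n r : ℕ) (hr1 : 1 ≤ r) (hrn : r ≤ n)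
    (S : Matrix (Fin r) (Fin n ⊕ Fin n) (ZMod 2))
    (hindep : LinearIndependent (ZMod 2) S)
    (hiso : S * Lam n * Sᵀ = 0) :
    ∃ (π : Equiv.Perm (Fin n))
      (Gz Gx : Matrix (Fin (n-r)) (Fin n ⊕ Fin n) (ZMod 2))
      (x : Fin r → (Fin n ⊕ Fin n) → ZMod 2),
      -- the relabeled stabilizer check matrix
      let S' : Matrix (Fin r) (Fin n ⊕ Fin n) (ZMod 2) :=
        S.submatrix id (Sum.map π π)
      -- (i) logical operators commute with all stabilizer generators
      (S' * Lam n * Gzᵀ = 0 ∧ S' * Lam n * Gxᵀ = 0) ∧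
      -- (ii) canonical (anti)commutation relations among logical operators
      (Gz * Lam n * Gzᵀ = 0 ∧ Gx * Lam n * Gxᵀ = 0 ∧ Gz * Lam n * Gxᵀ = 1) ∧
      -- (iii) on the first n-r (upload) qubits, Gz acts exactly as single-qubit Z
      -- and Gx exactly as single-qubit X
      ((∀ (i : Fin (n-r)) (j : Fin n), Gz i (Sum.inl j) = 0) ∧
       (∀ i j : Fin (n-r), Gz i (Sum.inr (Fin.castLE (Nat.sub_le n r) j))
          = if i = j then 1 else 0) ∧
       (∀ i j : Fin (n-r), Gx i (Sum.inr (Fin.castLE (Nat.sub_le n r) j)) = 0) ∧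
       (∀ i j : Fin (n-r), Gx i (Sum.inl (Fin.castLE (Nat.sub_le n r) j))
          = if i = j then 1 else 0)) ∧
      -- (iv) the stacked matrix has independent rows and the correction rows
      -- x_i realize the dual basis conditions  S̄ Lam n x_i = e_i
      (LinearIndependent (ZMod 2)
          (Sum.elim (fun a => S' a) (Sum.elim (fun a => Gz a) (fun a => Gx a))) ∧
       ∀ i : Fin r,
         (Matrix.of (Sum.elim (fun a => S' a) (Sum.elim (fun a => Gz a) (fun a => Gx a)))
            * Lam n).mulVec (x i)
           = Pi.single (Sum.inl i : Fin r ⊕ (Fin (n-r) ⊕ Fin (n-r))) 1) := by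
  classical
  -- column functionals
  set colX : Fin n → (Fin r → ZMod 2) := fun j a => S a (Sum.inl j) with hcolX
  set colZ : Fin n → (Fin r → ZMod 2) := fun j a => S a (Sum.inr j) with hcolZ
  have hind : ∀ ψ : Fin r → ZMod 2, ∑ a, ψ a • S a = 0 → ψ = 0 := by
    intro ψ h
    exact funext (Fintype.linearIndependent_iff.mp hindep ψ h)
  have hisoω : ∀ a b, om (S a) (S b) = 0 := by
    intro a b
    have h : (S * Lam n * Sᵀ) a b = om (S a) (S b) := mul_lam_mul_apply S S a b
    rw [hiso] at h
    exact h.symm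
  -- T₁ : pivot columns for the X part
  obtain ⟨b₁, hb₁sub, hb₁span, hb₁ind⟩ := exists_linearIndependent (ZMod 2) (Set.range colX)
  have hb₁fin : b₁.Finite := (Set.finite_range colX).subset hb₁sub
  haveI : Fintype b₁ := hb₁fin.fintype
  choose sec hsec using fun v : b₁ => (hb₁sub v.2 : ∃ j, colX j = ↑v)
  set T₁ : Finset (Fin n) := Finset.univ.image (fun v : b₁ => sec v) with hT₁
  have hsec_inj : Function.Injective sec := fun v w h =>
    Subtype.ext (by rw [← hsec v, ← hsec w, h])
  have himg : Set.range (fun t : ↥T₁ => colX ↑t) = b₁ := by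
    ext v
    constructor
    · rintro ⟨t, rfl⟩
      obtain ⟨w, -, hw⟩ := Finset.mem_image.mp t.2
      show colX ↑t ∈ b₁
      rw [← hw, hsec w]; exact w.2
    · intro hv
      refine ⟨⟨sec ⟨v, hv⟩, Finset.mem_image.mpr ⟨⟨v, hv⟩, Finset.mem_univ _, rfl⟩⟩, ?_⟩
      exact hsec ⟨v, hv⟩
  have hXmem : ∀ j, colX j ∈ span (ZMod 2) (Set.range (fun t : ↥T₁ => colX ↑t)) := by
    intro j
    rw [himg, hb₁span]
    exact subset_span (Set.mem_range_self j)
  have hT₁ind : LinearIndependent (ZMod 2) (fun t : ↥T₁ => colX ↑t) := by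
    set e : ↥T₁ → b₁ := fun t => ⟨colX ↑t, by rw [← himg]; exact ⟨t, rfl⟩⟩ with he
    have hecomp : (fun t : ↥T₁ => colX ↑t) = Subtype.val ∘ e := rfl
    have einj : Function.Injective e := by
      intro t t' h
      obtain ⟨v, -, hv⟩ := Finset.mem_image.mp t.2
      obtain ⟨v', -, hv'⟩ := Finset.mem_image.mp t'.2
      have h1 : colX ↑t = colX ↑t' := congrArg Subtype.val h
      rw [← hv, ← hv', hsec v, hsec v'] at h1
      have : v = v' := Subtype.ext h1
      exact Subtype.ext (by rw [← hv, ← hv', this])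
    exact hb₁ind.comp e einj
  -- kernel lemma: a functional vanishing on all X columns and on Z columns off T₁ is zero
  have hker : ∀ ψ : Fin r → ZMod 2, (∀ j, (∑ a, ψ a * S a (Sum.inl j)) = 0) →
      (∀ j ∉ T₁, (∑ a, ψ a * S a (Sum.inr j)) = 0) → ψ = 0 := by
    intro ψ h1 h2
    by_contra hne
    set w : (Fin n ⊕ Fin n) → ZMod 2 := ∑ a, ψ a • S a with hw
    have hw0 : w ≠ 0 := fun h => hne (hind ψ (by rw [← hw, h]))
    have hwl : ∀ j, w (Sum.inl j) = 0 := by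
      intro j
      rw [hw]
      simpa [Finset.sum_apply] using h1 j
    have hwr : ∀ j ∉ T₁, w (Sum.inr j) = 0 := by
      intro j hj
      rw [hw]
      simpa [Finset.sum_apply] using h2 j hj
    obtain ⟨c, hc⟩ : ∃ c, w c ≠ 0 := by
      by_contra h
      push_neg at h
      exact hw0 (funext h)
    obtain ⟨t, ht, hwt⟩ : ∃ t, t ∈ T₁ ∧ w (Sum.inr t) ≠ 0 := by
      cases c with
      | inl j => exact absurd (hwl j) hc
      | inr j =>
          by_cases hj : j ∈ T₁
          · exact ⟨j, hj, hc⟩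
          · exact absurd (hwr j hj) hc
    set uvec : Fin r → ZMod 2 := ∑ t' : ↥T₁, w (Sum.inr ↑t') • colX ↑t' with huvec
    have huv : uvec ≠ 0 := by
      intro h0
      exact hwt (Fintype.linearIndependent_iff.mp hT₁ind
        (fun t' => w (Sum.inr ↑t')) (by rw [← huvec, h0]) ⟨t, ht⟩)
    obtain ⟨a₀, ha₀⟩ : ∃ a₀, uvec a₀ ≠ 0 := by
      by_contra h
      push_neg at h
      exact huv (funext h)
    have h1' : om w (S a₀) = 0 := by
      rw [hw]
      refine (om_sum_left ψ (fun a => S a) (S a₀)).trans ?_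
      simp [hisoω]
    have h2' : om w (S a₀) = uvec a₀ := by
      rw [om_eq]
      have hz : (∑ j, w (Sum.inl j) * S a₀ (Sum.inr j)) = 0 := by
        refine Finset.sum_eq_zero fun j _ => ?_
        rw [hwl j, zero_mul]
      rw [hz, zero_add]
      rw [← Finset.sum_subset (Finset.subset_univ T₁)
        (fun j _ hj => by rw [hwr j hj, zero_mul])]
      rw [← Finset.sum_coe_sort T₁ (fun j => w (Sum.inr j) * S a₀ (Sum.inl j))]
      rw [huvec]
      simp [Finset.sum_apply]
      rfl
    rw [h1'] at h2'
    exact ha₀ h2'.symm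
  -- the matrix N : S with the T₁ Z-columns zeroed out
  set p₁ : Submodule (ZMod 2) (Fin r → ZMod 2) := span (ZMod 2) (Set.range colX) with hp₁
  set N : Matrix (Fin r) (Fin n ⊕ Fin n) (ZMod 2) :=
    Matrix.of fun a c => Sum.elim (fun j => S a (Sum.inl j))
      (fun j => if j ∈ T₁ then 0 else S a (Sum.inr j)) c with hN
  have hNsurj : Function.Surjective N.mulVecLin := by
    apply key_surj
    intro ψ hψ
    apply hker ψ
    · intro j
      have h := congrFun hψ (Sum.inl j)
      simpa [Matrix.vecMul, dotProduct, hN] using h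
    · intro j hj
      have h := congrFun hψ (Sum.inr j)
      simpa [Matrix.vecMul, dotProduct, hN, hj] using h
  -- the quotient by the span of the X columns
  set g : Fin n → ((Fin r → ZMod 2) ⧸ p₁) :=
    fun j => if j ∈ T₁ then 0 else p₁.mkQ (colZ j) with hg
  have hgtop : span (ZMod 2) (Set.range g) = ⊤ := by
    rw [Submodule.eq_top_iff']
    intro q
    obtain ⟨y, rfl⟩ := p₁.mkQ_surjective q
    obtain ⟨x, hx⟩ := hNsurj y
    have hy : y = ∑ c : (Fin n ⊕ Fin n), x c • (fun a => N a c) := by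
      funext a
      rw [← hx]
      simp [Matrix.mulVecLin_apply, Matrix.mulVec, dotProduct, Finset.sum_apply, mul_comm]
    rw [hy, map_sum]
    refine Submodule.sum_mem _ fun c _ => ?_
    rw [LinearMap.map_smul]
    refine Submodule.smul_mem _ _ ?_
    cases c with
    | inl j =>
        have : (fun a => N a (Sum.inl j)) = colX j := rfl
        rw [this]
        have : p₁.mkQ (colX j) = 0 := by
          rw [← LinearMap.mem_ker, Submodule.ker_mkQ]
          exact subset_span (Set.mem_range_self j)
        rw [this]
        exact Submodule.zero_mem _
    | inr j =>
        by_cases hj : j ∈ T₁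
        · have : (fun a => N a (Sum.inr j)) = 0 := by
            funext a; simp [hN, hj]
          rw [this, map_zero]
          exact Submodule.zero_mem _
        · have : (fun a => N a (Sum.inr j)) = colZ j := by
            funext a; simp [hN, hj, hcolZ]
          rw [this]
          have : p₁.mkQ (colZ j) = g j := by rw [hg]; simp [hj]
          rw [this]
          exact subset_span (Set.mem_range_self j)
  -- T₂ : pivot columns for the Z part modulo the X columns
  obtain ⟨b₂, hb₂sub, hb₂span, hb₂ind⟩ := exists_linearIndependent (ZMod 2) (Set.range g)
  haveI : Fintype b₂ := ((Set.finite_range g).subset hb₂sub).fintype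
  choose sec₂ hsec₂ using fun v : b₂ => (hb₂sub v.2 : ∃ j, g j = ↑v)
  set T₂ : Finset (Fin n) := Finset.univ.image (fun v : b₂ => sec₂ v) with hT₂
  have hb₂ne : ∀ v : b₂, (v : (Fin r → ZMod 2) ⧸ p₁) ≠ 0 := by
    intro v
    exact hb₂ind.ne_zero v
  have hT₂notT₁ : ∀ j ∈ T₂, j ∉ T₁ := by
    intro j hj hj1
    obtain ⟨v, -, hv⟩ := Finset.mem_image.mp hj
    apply hb₂ne v
    rw [← hsec₂ v, hv, hg]
    simp [hj1]
  -- cardinalities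
  have hcardT₁ : T₁.card = Module.finrank (ZMod 2) p₁ := by
    rw [hT₁, Finset.card_image_of_injective _ hsec_inj, Finset.card_univ, ← hb₁span,
      finrank_span_set_eq_card hb₁ind, Set.toFinset_card]
  have hcardT₂ : T₂.card ≤ Module.finrank (ZMod 2) ((Fin r → ZMod 2) ⧸ p₁) := by
    calc T₂.card ≤ Finset.univ.card := Finset.card_image_le
    _ = Fintype.card b₂ := Finset.card_univ
    _ = Module.finrank (ZMod 2) ((Fin r → ZMod 2) ⧸ p₁) := by
        rw [← Set.toFinset_card, ← finrank_span_set_eq_card hb₂ind, hb₂span, hgtop, finrank_top]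
  have hcard12 : T₁.card + T₂.card ≤ r := by
    have := Submodule.finrank_quotient_add_finrank p₁
    have hfr : Module.finrank (ZMod 2) (Fin r → ZMod 2) = r := by
      rw [Module.finrank_fintype_fun_eq_card, Fintype.card_fin]
    omega
  -- spanning: every Z column lies in span of T₁ X-columns and T₂ Z-columns
  have hTopMem : ∀ y : Fin r → ZMod 2,
      y ∈ span (ZMod 2) (Set.range (Sum.elim (fun t : ↥T₁ => colX ↑t) (fun t : ↥T₂ => colZ ↑t))) := by
    intro y
    rw [Set.Sum.elim_range, span_union]
    have hq : p₁.mkQ y ∈ span (ZMod 2) (p₁.mkQ '' (Set.range (fun t : ↥T₂ => colZ ↑t))) := by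
      have hbsub : b₂ ⊆ p₁.mkQ '' (Set.range (fun t : ↥T₂ => colZ ↑t)) := by
        intro v hv
        have hnot : sec₂ ⟨v, hv⟩ ∉ T₁ := hT₂notT₁ _ (Finset.mem_image.mpr ⟨⟨v, hv⟩, Finset.mem_univ _, rfl⟩)
        refine ⟨colZ (sec₂ ⟨v, hv⟩), ⟨⟨sec₂ ⟨v, hv⟩, Finset.mem_image.mpr ⟨⟨v, hv⟩, Finset.mem_univ _, rfl⟩⟩, rfl⟩, ?_⟩
        have := hsec₂ ⟨v, hv⟩
        rw [hg] at this
        simpa [hnot] using this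
      have : p₁.mkQ y ∈ (⊤ : Submodule (ZMod 2) ((Fin r → ZMod 2) ⧸ p₁)) := trivial
      rw [← hgtop, ← hb₂span] at this
      exact span_mono hbsub this
    rw [Submodule.span_image] at hq
    obtain ⟨z, hz, hzy⟩ := hq
    have hyz : y - z ∈ p₁ := by
      rw [← Submodule.Quotient.eq, ← Submodule.mkQ_apply, ← Submodule.mkQ_apply]
      exact hzy.symm
    have h1 : y - z ∈ span (ZMod 2) (Set.range (fun t : ↥T₁ => colX ↑t)) := by
      have : span (ZMod 2) (Set.range (fun t : ↥T₁ => colX ↑t)) = p₁ := by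
        rw [himg, hb₁span]
      rw [this]
      exact hyz
    have := Submodule.add_mem_sup h1 hz
    simpa using this
  -- the set T of non-upload qubits, and the permutation
  obtain ⟨T, hsubT, -, hTcard⟩ := Finset.exists_subsuperset_card_eq
    (Finset.subset_univ (T₁ ∪ T₂)) (le_trans (Finset.card_union_le _ _) hcard12)
    (by simpa using hrn)
  set U : Finset (Fin n) := Tᶜ with hU
  have hUcard : U.card = n - r := by
    rw [hU, Finset.card_compl, hTcard, Fintype.card_fin]
  have hnn : n - r + r = n := Nat.sub_add_cancel hrn
  set e₁ := U.orderIsoOfFin hUcard with he₁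
  set e₂ := T.orderIsoOfFin hTcard with he₂
  set e₂' : Fin r ≃ {a : Fin n // ¬ a ∈ U} :=
    e₂.toEquiv.trans (Equiv.subtypeEquivRight (fun a => by
      rw [hU]; simp)) with he₂'
  set π : Equiv.Perm (Fin n) :=
    ((finCongr hnn.symm).trans finSumFinEquiv.symm).trans
      ((e₁.toEquiv.sumCongr e₂').trans (Equiv.sumCompl (· ∈ U))) with hπ
  set u : Fin (n-r) → Fin n := fun i => π (Fin.castLE (Nat.sub_le n r) i) with hu
  have hupre : ∀ i : Fin (n-r),
      finSumFinEquiv.symm ((finCongr hnn.symm) (Fin.castLE (Nat.sub_le n r) i))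
        = Sum.inl i := by
    intro i
    rw [Equiv.symm_apply_eq, finSumFinEquiv_apply_left]
    ext
    simp
  have huU : ∀ i, u i ∈ U := by
    intro i
    rw [hu, hπ]
    simp only [Equiv.trans_apply]
    rw [hupre i]
    simp only [Equiv.sumCongr_apply, Sum.map_inl, Equiv.sumCompl_apply_inl]
    exact (e₁ i).2
  have hu_inj : Function.Injective u := by
    intro i j h
    have := π.injective h
    exact Fin.castLE_injective _ this
  have huT : ∀ i, u i ∉ T := fun i => Finset.mem_compl.mp (huU i)
  have huT₁ : ∀ i, u i ∉ T₁ := fun i hmem =>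
    huT i (hsubT (Finset.mem_union_left _ hmem))
  have huT₂ : ∀ i, u i ∉ T₂ := fun i hmem =>
    huT i (hsubT (Finset.mem_union_right _ hmem))
  -- correction coefficients
  have hmz : ∀ j : Fin n, ∃ c : ↥T₁ → ZMod 2,
      ∀ a, (∑ t : ↥T₁, c t * S a (Sum.inl ↑t)) = S a (Sum.inl j) := by
    intro j
    obtain ⟨c, hc⟩ := (mem_span_range_iff_exists_fun (ZMod 2)).mp (hXmem j)
    refine ⟨c, fun a => ?_⟩
    have := congrFun hc a
    simpa [Finset.sum_apply] using this
  choose mz hmz' using hmz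
  have hpq : ∀ j : Fin n, ∃ c : (↥T₁ ⊕ ↥T₂) → ZMod 2, ∀ a,
      (∑ t : ↥T₁, c (Sum.inl t) * S a (Sum.inl ↑t))
        + (∑ t : ↥T₂, c (Sum.inr t) * S a (Sum.inr ↑t)) = S a (Sum.inr j) := by
    intro j
    obtain ⟨c, hc⟩ := (mem_span_range_iff_exists_fun (ZMod 2)).mp (hTopMem (colZ j))
    refine ⟨c, fun a => ?_⟩
    have := congrFun hc a
    rw [Fintype.sum_sum_type] at this
    simpa [Finset.sum_apply] using this
  choose pqx hpq' using hpq
  -- support-extended corrections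
  set zc : Fin (n-r) → Fin n → ZMod 2 :=
    fun i j => if h : j ∈ T₁ then mz (u i) ⟨j, h⟩ else 0 with hzc
  set pc : Fin (n-r) → Fin n → ZMod 2 :=
    fun i j => if h : j ∈ T₁ then pqx (u i) (Sum.inl ⟨j, h⟩) else 0 with hpc
  set qc : Fin (n-r) → Fin n → ZMod 2 :=
    fun i j => if h : j ∈ T₂ then pqx (u i) (Sum.inr ⟨j, h⟩) else 0 with hqc
  -- the logical rows, in the original qubit labeling
  set Zr : Fin (n-r) → (Fin n ⊕ Fin n) → ZMod 2 :=
    fun i => Sum.elim (fun _ => 0) (fun j => (if j = u i then 1 else 0) + zc i j) with hZr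
  set Xr : Fin (n-r) → (Fin n ⊕ Fin n) → ZMod 2 :=
    fun i => Sum.elim (fun j => (if j = u i then 1 else 0) + qc i j) (fun j => pc i j) with hXr
  -- summation identities
  have hzc_sum : ∀ i a, (∑ j : Fin n, zc i j * S a (Sum.inl j)) = S a (Sum.inl (u i)) := by
    intro i a
    rw [← Finset.sum_subset (Finset.subset_univ T₁)
      (fun j _ hj => by rw [hzc]; simp [hj])]
    rw [← Finset.sum_coe_sort T₁ (fun j => zc i j * S a (Sum.inl j))]
    rw [← hmz' (u i) a]
    refine Finset.sum_congr rfl fun t _ => ?_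
    rw [hzc]
    simp
  have hpq_sum : ∀ i a, (∑ j : Fin n, pc i j * S a (Sum.inl j))
      + (∑ j : Fin n, qc i j * S a (Sum.inr j)) = S a (Sum.inr (u i)) := by
    intro i a
    rw [← Finset.sum_subset (Finset.subset_univ T₁)
      (fun j _ hj => by rw [hpc]; simp [hj])]
    rw [← Finset.sum_subset (Finset.subset_univ T₂)
      (fun j _ hj => by rw [hqc]; simp [hj])]
    rw [← Finset.sum_coe_sort T₁ (fun j => pc i j * S a (Sum.inl j))]
    rw [← Finset.sum_coe_sort T₂ (fun j => qc i j * S a (Sum.inr j))]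
    rw [← hpq' (u i) a]
    congr 1
    · refine Finset.sum_congr rfl fun t _ => ?_
      rw [hpc]; simp
    · refine Finset.sum_congr rfl fun t _ => ?_
      rw [hqc]; simp
  -- orthogonality relations
  have hZS : ∀ i a, om (Zr i) (S a) = 0 := by
    intro i a
    rw [om_eq]
    have h0 : (∑ j, Zr i (Sum.inl j) * S a (Sum.inr j)) = 0 := by
      refine Finset.sum_eq_zero fun j _ => ?_
      rw [hZr]; simp
    rw [h0, zero_add]
    have hterm : ∀ j, Zr i (Sum.inr j) * S a (Sum.inl j)
        = (if j = u i then S a (Sum.inl j) else 0) + zc i j * S a (Sum.inl j) := by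
      intro j; rw [hZr]; simp [add_mul, ite_mul]
    rw [Finset.sum_congr rfl (fun j _ => hterm j), Finset.sum_add_distrib,
      Finset.sum_ite_eq' Finset.univ (u i) (fun j => S a (Sum.inl j)),
      hzc_sum i a]
    simp [add_self]
  have hXS : ∀ i a, om (Xr i) (S a) = 0 := by
    intro i a
    rw [om_eq]
    have h1 : (∑ j, Xr i (Sum.inl j) * S a (Sum.inr j))
        = S a (Sum.inr (u i)) + ∑ j, qc i j * S a (Sum.inr j) := by
      have hterm : ∀ j, Xr i (Sum.inl j) * S a (Sum.inr j)
          = (if j = u i then S a (Sum.inr j) else 0) + qc i j * S a (Sum.inr j) := by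
        intro j; rw [hXr]; simp [add_mul, ite_mul]
      rw [Finset.sum_congr rfl (fun j _ => hterm j), Finset.sum_add_distrib,
        Finset.sum_ite_eq' Finset.univ (u i) (fun j => S a (Sum.inr j))]
      simp
    have h2 : (∑ j, Xr i (Sum.inr j) * S a (Sum.inl j))
        = ∑ j, pc i j * S a (Sum.inl j) := by
      refine Finset.sum_congr rfl fun j _ => ?_
      rw [hXr]
      rfl
    rw [h1, h2, ← hpq_sum i a]
    have hxy : ∀ x y : ZMod 2, x + y + y + x = 0 := by decide
    exact hxy _ _
  have hZZ : ∀ i i', om (Zr i) (Zr i') = 0 := by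
    intro i i'
    rw [om_eq]
    rw [Finset.sum_eq_zero (fun j _ => by rw [hZr]; simp),
      Finset.sum_eq_zero (fun j _ => by rw [hZr]; simp), add_zero]
  have hXX : ∀ i i', om (Xr i) (Xr i') = 0 := by
    intro i i'
    rw [om_eq]
    have h1 : ∀ j : Fin n, Xr i (Sum.inl j) * Xr i' (Sum.inr j) = 0 := by
      intro j
      rw [hXr]
      simp only [Sum.elim_inl, Sum.elim_inr]
      by_cases hj1 : j ∈ T₁
      · have h1 : j ≠ u i := fun h => huT₁ i (h ▸ hj1)
        have h3 : j ∉ T₂ := fun h => hT₂notT₁ j h hj1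
        rw [hqc]
        simp [h1, h3]
      · rw [hpc]
        simp [hj1]
    have h2 : ∀ j : Fin n, Xr i (Sum.inr j) * Xr i' (Sum.inl j) = 0 := by
      intro j
      rw [hXr]
      simp only [Sum.elim_inl, Sum.elim_inr]
      by_cases hj1 : j ∈ T₁
      · have h1 : j ≠ u i' := fun h => huT₁ i' (h ▸ hj1)
        have h3 : j ∉ T₂ := fun h => hT₂notT₁ j h hj1
        rw [hqc]
        simp [h1, h3]
      · rw [hpc]
        simp [hj1]
    rw [Finset.sum_eq_zero (fun j _ => h1 j), Finset.sum_eq_zero (fun j _ => h2 j), add_zero]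
  have hZX : ∀ i i', om (Zr i) (Xr i') = if i = i' then 1 else 0 := by
    intro i i'
    rw [om_eq]
    rw [Finset.sum_eq_zero (fun j _ => by rw [hZr]; simp), zero_add]
    have hterm : ∀ j : Fin n, Zr i (Sum.inr j) * Xr i' (Sum.inl j)
        = if j = u i then (if j = u i' then 1 else 0) else 0 := by
      intro j
      rw [hZr, hXr]
      simp only [Sum.elim_inl, Sum.elim_inr]
      by_cases hj1 : j ∈ T₁
      · have h1 : j ≠ u i := fun h => huT₁ i (h ▸ hj1)
        have h2 : j ≠ u i' := fun h => huT₁ i' (h ▸ hj1)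
        have h3 : j ∉ T₂ := fun h => hT₂notT₁ j h hj1
        rw [hqc]
        simp [h1, h2, h3]
      · by_cases hj2 : j ∈ T₂
        · have h1 : j ≠ u i := fun h => huT₂ i (h ▸ hj2)
          have h2 : j ≠ u i' := fun h => huT₂ i' (h ▸ hj2)
          rw [hzc]
          simp [h1, h2, hj1]
        · rw [hzc, hqc]
          by_cases h1 : j = u i <;> by_cases h2 : j = u i' <;> simp [hj1, hj2, h1, h2, huT₁ i, huT₁ i', huT₂ i, huT₂ i', hu_inj.eq_iff]
    rw [Finset.sum_congr rfl (fun j _ => hterm j),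
      Finset.sum_ite_eq' Finset.univ (u i) (fun j => if j = u i' then 1 else 0)]
    by_cases h : i = i'
    · subst h; simp
    · have huu : u i ≠ u i' := fun hh => h (hu_inj hh)
      simp [h, huu]
  -- invariance of the symplectic pairing under the qubit relabeling
  have hσ : ∀ v w : (Fin n ⊕ Fin n) → ZMod 2,
      om (fun c => v (Sum.map ⇑π ⇑π c)) (fun c => w (Sum.map ⇑π ⇑π c)) = om v w := by
    intro v w
    rw [om_eq, om_eq]
    congr 1
    · exact Fintype.sum_bijective ⇑π π.bijective _ _ (fun j => rfl)
    · exact Fintype.sum_bijective ⇑π π.bijective _ _ (fun j => rfl)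
  -- the matrices
  set Gz : Matrix (Fin (n-r)) (Fin n ⊕ Fin n) (ZMod 2) :=
    Matrix.of fun i c => Zr i (Sum.map ⇑π ⇑π c) with hGz
  set Gx : Matrix (Fin (n-r)) (Fin n ⊕ Fin n) (ZMod 2) :=
    Matrix.of fun i c => Xr i (Sum.map ⇑π ⇑π c) with hGx
  -- condition (i)
  have hi1 : S.submatrix id (Sum.map ⇑π ⇑π) * Lam n * Gzᵀ = 0 := by
    ext a b
    rw [mul_lam_mul_apply, Matrix.zero_apply]
    exact (hσ (S a) (Zr b)).trans ((om_comm _ _).trans (hZS b a))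
  have hi2 : S.submatrix id (Sum.map ⇑π ⇑π) * Lam n * Gxᵀ = 0 := by
    ext a b
    rw [mul_lam_mul_apply, Matrix.zero_apply]
    exact (hσ (S a) (Xr b)).trans ((om_comm _ _).trans (hXS b a))
  -- condition (ii)
  have hii1 : Gz * Lam n * Gzᵀ = 0 := by
    ext a b
    rw [mul_lam_mul_apply, Matrix.zero_apply]
    exact (hσ (Zr a) (Zr b)).trans (hZZ a b)
  have hii2 : Gx * Lam n * Gxᵀ = 0 := by
    ext a b
    rw [mul_lam_mul_apply, Matrix.zero_apply]
    exact (hσ (Xr a) (Xr b)).trans (hXX a b)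
  have hii3 : Gz * Lam n * Gxᵀ = 1 := by
    ext a b
    rw [mul_lam_mul_apply, Matrix.one_apply]
    exact (hσ (Zr a) (Xr b)).trans (hZX a b)
  -- condition (iii)
  have hgz1 : ∀ (i : Fin (n-r)) (j : Fin n), Gz i (Sum.inl j) = 0 := by
    intro i j
    rfl
  have hgz2 : ∀ i j : Fin (n-r),
      Gz i (Sum.inr (Fin.castLE (Nat.sub_le n r) j)) = if i = j then 1 else 0 := by
    intro i j
    show Zr i (Sum.inr (u j)) = _
    rw [hZr]
    simp only [Sum.elim_inr]
    simp only [hzc]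
    rw [dif_neg (huT₁ j)]
    by_cases h : i = j
    · subst h; simp
    · have huu : u j ≠ u i := fun hh => h (hu_inj hh).symm
      simp [h, huu]
  have hgx1 : ∀ i j : Fin (n-r),
      Gx i (Sum.inr (Fin.castLE (Nat.sub_le n r) j)) = 0 := by
    intro i j
    show Xr i (Sum.inr (u j)) = 0
    rw [hXr]
    simp only [Sum.elim_inr]
    simp only [hpc]
    rw [dif_neg (huT₁ j)]
  have hgx2 : ∀ i j : Fin (n-r),
      Gx i (Sum.inl (Fin.castLE (Nat.sub_le n r) j)) = if i = j then 1 else 0 := by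
    intro i j
    show Xr i (Sum.inl (u j)) = _
    rw [hXr]
    simp only [Sum.elim_inl]
    simp only [hqc]
    rw [dif_neg (huT₂ j)]
    by_cases h : i = j
    · subst h; simp
    · have huu : u j ≠ u i := fun hh => h (hu_inj hh).symm
      simp [h, huu]
  -- the stacked family
  set Rfam : (Fin r ⊕ (Fin (n-r) ⊕ Fin (n-r))) → (Fin n ⊕ Fin n) → ZMod 2 :=
    Sum.elim (fun a => S.submatrix id (Sum.map ⇑π ⇑π) a)
      (Sum.elim (fun a => Gz a) (fun a => Gx a)) with hRfam
  have hli : LinearIndependent (ZMod 2) Rfam := by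
    rw [Fintype.linearIndependent_iff]
    intro gc hg
    have hpair : ∀ w : (Fin n ⊕ Fin n) → ZMod 2,
        (∑ idx, gc idx * om (Rfam idx) w) = 0 := by
      intro w
      rw [← om_sum_left gc Rfam w, hg, om_zero_left]
    have hbz : ∀ b, gc (Sum.inr (Sum.inr b)) = 0 := by
      intro b
      have h := hpair (fun c => Zr b (Sum.map ⇑π ⇑π c))
      rw [Fintype.sum_sum_type, Fintype.sum_sum_type] at h
      have e1 : ∀ a, om (Rfam (Sum.inl a)) (fun c => Zr b (Sum.map ⇑π ⇑π c)) = 0 := fun a =>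
        (hσ (S a) (Zr b)).trans ((om_comm _ _).trans (hZS b a))
      have e2 : ∀ a, om (Rfam (Sum.inr (Sum.inl a))) (fun c => Zr b (Sum.map ⇑π ⇑π c)) = 0 :=
        fun a => (hσ (Zr a) (Zr b)).trans (hZZ a b)
      have e3 : ∀ a, om (Rfam (Sum.inr (Sum.inr a))) (fun c => Zr b (Sum.map ⇑π ⇑π c))
          = if b = a then 1 else 0 := fun a =>
        (hσ (Xr a) (Zr b)).trans ((om_comm _ _).trans (hZX b a))
      simp only [e1, e2, e3, mul_zero, mul_ite, mul_one, Finset.sum_const_zero, zero_add,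
        Finset.sum_ite_eq, Finset.mem_univ, if_true] at h
      exact h
    have hbx : ∀ b, gc (Sum.inr (Sum.inl b)) = 0 := by
      intro b
      have h := hpair (fun c => Xr b (Sum.map ⇑π ⇑π c))
      rw [Fintype.sum_sum_type, Fintype.sum_sum_type] at h
      have e1 : ∀ a, om (Rfam (Sum.inl a)) (fun c => Xr b (Sum.map ⇑π ⇑π c)) = 0 := fun a =>
        (hσ (S a) (Xr b)).trans ((om_comm _ _).trans (hXS b a))
      have e2 : ∀ a, om (Rfam (Sum.inr (Sum.inl a))) (fun c => Xr b (Sum.map ⇑π ⇑π c))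
          = if a = b then 1 else 0 :=
        fun a => (hσ (Zr a) (Xr b)).trans (hZX a b)
      have e3 : ∀ a, om (Rfam (Sum.inr (Sum.inr a))) (fun c => Xr b (Sum.map ⇑π ⇑π c)) = 0 :=
        fun a => (hσ (Xr a) (Xr b)).trans (hXX a b)
      simp only [e1, e2, e3, mul_zero, mul_ite, mul_one, Finset.sum_const_zero, zero_add,
        add_zero, Finset.sum_ite_eq', Finset.mem_univ, if_true] at h
      exact h
    have hψ : (fun a => gc (Sum.inl a)) = 0 := by
      apply hind
      funext c
      rw [Fintype.sum_sum_type, Fintype.sum_sum_type] at hg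
      simp only [hbz, hbx, zero_smul, Finset.sum_const_zero, add_zero, zero_add] at hg
      have h1 := congrFun hg ((Equiv.sumCongr π π).symm c)
      simp only [hRfam, Sum.elim_inl, Finset.sum_apply, Pi.smul_apply, smul_eq_mul,
        Matrix.submatrix_apply, id_eq, Pi.zero_apply, ← Equiv.sumCongr_apply,
        Equiv.apply_symm_apply] at h1
      simp only [Finset.sum_apply, Pi.smul_apply, smul_eq_mul, Pi.zero_apply]
      exact h1
    intro idx
    cases idx with
    | inl a => exact congrFun hψ a
    | inr b =>
        cases b with
        | inl b => exact hbx b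
        | inr b => exact hbz b
  -- the correction vectors
  set Rbig : Matrix (Fin r ⊕ (Fin (n-r) ⊕ Fin (n-r))) (Fin n ⊕ Fin n) (ZMod 2) :=
    Matrix.of Rfam with hRbig
  have hvin : ∀ ψg : (Fin r ⊕ (Fin (n-r) ⊕ Fin (n-r))) → ZMod 2,
      ψg ᵥ* (Rbig * Lam n) = 0 → ψg = 0 := by
    intro ψg hψg
    have h0 : ψg ᵥ* Rbig = 0 := by
      have h1 : (ψg ᵥ* (Rbig * Lam n)) ᵥ* Lam n = ψg ᵥ* Rbig := by
        rw [← Matrix.vecMul_vecMul, Matrix.vecMul_vecMul, lam_mul_lam, Matrix.vecMul_one]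
      rw [← h1, hψg, Matrix.zero_vecMul]
    have hsum : (∑ idx, ψg idx • Rfam idx) = 0 := by
      funext c
      have := congrFun h0 c
      simpa [Matrix.vecMul, dotProduct, Finset.sum_apply, hRbig] using this
    exact funext (Fintype.linearIndependent_iff.mp hli ψg hsum)
  have hsurj := key_surj (Rbig * Lam n) hvin
  choose xf hxf using fun i : Fin r =>
    hsurj (Pi.single (Sum.inl i : Fin r ⊕ (Fin (n-r) ⊕ Fin (n-r))) 1)
  have hx4 : ∀ i : Fin r, (Rbig * Lam n).mulVec (xf i)
      = Pi.single (Sum.inl i : Fin r ⊕ (Fin (n-r) ⊕ Fin (n-r))) 1 := by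
    intro i
    have := hxf i
    rwa [Matrix.mulVecLin_apply] at this
  exact ⟨π, Gz, Gx, xf, ⟨hi1, hi2⟩, ⟨hii1, hii2, hii3⟩, ⟨hgz1, hgz2, hgx1, hgx2⟩, hli, hx4⟩
end
end

section
/- Let (V', τ') and (V'', τ'') be two subsystem initializations of ℂ^{d_L} into ℂ^{d_P} with τ' and τ'' of full rank, and let Π' and Π'' denote the orthogonal projections onto the images of the respective ℂ^{d_L} ⊗ ℂ^{d_F} summands. Suppose that for every unit vector ψ ∈ ℂ^{d_L} there exist positive semidefinite operators τ̃'(ψ) and τ̃''(ψ) (possibly depending on ψ) such that Π' (V''(|ψ⟩⟨ψ| ⊗ τ'' ⊕ 0)V''*) Π' = V'(|ψ⟩⟨ψ| ⊗ τ̃'(ψ) ⊕ 0)V'* and Π'' (V'(|ψ⟩⟨ψ| ⊗ τ' ⊕ 0)V'*) Π'' = V''(|ψ⟩⟨ψ| ⊗ τ̃''(ψ) ⊕ 0)V''*. Then there exist positive semidefinite operators τ̃' and τ̃'', independent of the state, such that for every density operator ρ on ℂ^{d_L}: Π' (V''(ρ ⊗ τ'' ⊕ 0)V''*) Π' = V'(ρ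 ⊗ τ̃' ⊕ 0)V'* and Π'' (V'(ρ ⊗ τ' ⊕ 0)V'*) Π'' = V''(ρ ⊗ τ̃'' ⊕ 0)V''*; that is, the two initializations are compatible. -/
open Matrix Kronecker
open scoped ComplexOrder

noncomputable section

/-!
Conjugating by `V'ᴴ` and keeping the `(L × F')`-block turns `ρ ↦ Π' (initMap V'' τ'' ρ) Π'` into a
linear map `M : Mat_L → Mat_{L × F'}` with `M (ψψ*) = ψψ* ⊗ t(ψ)` for unit `ψ`, hence, rescaling,
for every vector. Comparing the `(i,i)`, `(j,j)` and `(i,j)` blocks of `M` at `eᵢ + z eⱼ` and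
`eᵢ - z eⱼ` (`|z| = 1`) shows that `t(eᵢ) = t(eⱼ) =: t` and
`M (z̄ Eᵢⱼ + z Eⱼᵢ) = (z̄ Eᵢⱼ + z Eⱼᵢ) ⊗ t`. Polarization (`z = 1, i`) then gives
`M Eᵢⱼ = Eᵢⱼ ⊗ t`, so `M ρ = ρ ⊗ t` by linearity. Swapping the two initializations gives `τ̃''`.
-/

section KroneckerFactor

variable {L F : Type*} (M : Matrix L L ℂ →ₗ[ℂ] Matrix (L × F) (L × F) ℂ)

theorem exists_map_vecMulVec_eq_kronecker [Fintype L]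
    (h : ∀ ψ : L → ℂ, star ψ ⬝ᵥ ψ = 1 →
      ∃ t : Matrix F F ℂ, M (vecMulVec ψ (star ψ)) = vecMulVec ψ (star ψ) ⊗ₖ t)
    (v : L → ℂ) : ∃ t : Matrix F F ℂ, M (vecMulVec v (star v)) = vecMulVec v (star v) ⊗ₖ t := by
  obtain rfl | hv := eq_or_ne v 0
  · exact ⟨0, by simp⟩
  have hpos : 0 < star v ⬝ᵥ v := dotProduct_star_self_pos_iff.2 hv
  set c : ℂ := (((√(star v ⬝ᵥ v).re)⁻¹ : ℝ) : ℂ)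
  have hc : star c * c * (star v ⬝ᵥ v) = 1 := by
    rw [Complex.eq_re_of_ofReal_le hpos.le]
    simp only [c, Complex.star_def, Complex.conj_ofReal, ← Complex.ofReal_mul, ← mul_inv,
      Real.mul_self_sqrt (Complex.pos_iff.1 hpos).1.le]
    exact_mod_cast inv_mul_cancel₀ (Complex.pos_iff.1 hpos).1.ne'
  obtain ⟨t, ht⟩ := h (c • v) (by
    rw [star_smul, smul_dotProduct, dotProduct_smul, smul_eq_mul, smul_eq_mul, ← hc]
    ring)
  refine ⟨t, smul_right_injective _ (left_ne_zero_of_mul_eq_one hc) ?_⟩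
  simpa only [star_smul, smul_vecMulVec, vecMulVec_smul, smul_smul, map_smul, smul_kronecker]
    using ht

variable [DecidableEq L]

theorem vecMulVec_single_star_single (i : L) :
    vecMulVec (Pi.single i 1) (star (Pi.single i 1)) = single i i (1 : ℂ) := by
  rw [← Pi.single_star, star_one, single_eq_single_vecMulVec_single]

theorem vecMulVec_single_add_smul_single (i j : L) (z : ℂ) :
    vecMulVec (Pi.single i 1 + z • Pi.single j 1) (star (Pi.single i 1 + z • Pi.single j 1))
      = single i i 1 + (star z • single i j (1 : ℂ) + z • single j i (1 : ℂ))
        + (star z * z) • single j j 1 := by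
  simp only [star_add, star_smul, ← Pi.single_star, star_one, add_vecMulVec, vecMulVec_add,
    smul_vecMulVec, vecMulVec_smul, ← single_eq_single_vecMulVec_single, smul_add, smul_smul]
  abel

theorem eq_and_eq_of_single_kronecker_add_eq {i j : L} (hij : i ≠ j) {A : Matrix L L ℂ}
    (hAii : A i i = 0) (hAjj : A j j = 0) (hAij : A i j ≠ 0) {X : Matrix (L × F) (L × F) ℂ}
    {tᵢ tⱼ s s' : Matrix F F ℂ}
    (h : single i i 1 ⊗ₖ tᵢ + X + single j j 1 ⊗ₖ tⱼ = (single i i 1 + A + single j j 1) ⊗ₖ s)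
    (h' : single i i 1 ⊗ₖ tᵢ + -X + single j j 1 ⊗ₖ tⱼ
      = (single i i 1 + -A + single j j 1) ⊗ₖ s') :
    tⱼ = tᵢ ∧ s = tᵢ := by
  have entries : ∀ a b, tⱼ a b = tᵢ a b ∧ s a b = tᵢ a b := by
    intro a b
    have entry : ∀ {Y Z : Matrix (L × F) (L × F) ℂ}, Y = Z →
        ∀ p q, Y (p, a) (q, b) = Z (p, a) (q, b) := fun h _ _ => by rw [h]
    have eii := entry h i i
    have eii' := entry h' i i
    have ejj := entry h j j
    have ejj' := entry h' j j
    have eij := entry h i j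
    have eij' := entry h' i j
    simp only [Matrix.add_apply, Matrix.neg_apply, kronecker_apply, Matrix.single_apply, hAii,
      hAjj, hij, hij.symm, and_self, and_false, false_and, if_true, if_false]
      at eii eii' ejj ejj' eij eij'
    have hss' : s a b = s' a b := mul_left_cancel₀ hAij (by linear_combination -(eij + eij'))
    exact ⟨by linear_combination (ejj + ejj' - eii - eii') / 2,
      by linear_combination hss' / 2 - (eii + eii') / 2⟩
  exact ⟨ext fun a b => (entries a b).1, ext fun a b => (entries a b).2⟩

theorem eq_and_map_single_add_single_eq_kronecker
    (hM : ∀ v : L → ℂ, ∃ s : Matrix F F ℂ, M (vecMulVec v (star v)) = vecMulVec v (star v) ⊗ₖ s)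
    {i j : L} (hij : i ≠ j) {tᵢ tⱼ : Matrix F F ℂ}
    (hi : M (single i i 1) = single i i 1 ⊗ₖ tᵢ) (hj : M (single j j 1) = single j j 1 ⊗ₖ tⱼ)
    {z : ℂ} (hz : star z * z = 1) :
    tⱼ = tᵢ ∧ M (star z • single i j (1 : ℂ) + z • single j i (1 : ℂ))
      = (star z • single i j (1 : ℂ) + z • single j i (1 : ℂ)) ⊗ₖ tᵢ := by
  obtain ⟨s, hs⟩ := hM (Pi.single i 1 + z • Pi.single j 1)
  obtain ⟨s', hs'⟩ := hM (Pi.single i 1 + (-z) • Pi.single j 1)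
  rw [vecMulVec_single_add_smul_single, hz, one_smul] at hs
  rw [vecMulVec_single_add_smul_single, star_neg, neg_mul, mul_neg, neg_neg, hz, one_smul,
    neg_smul, neg_smul, ← neg_add] at hs'
  set A := star z • single i j (1 : ℂ) + z • single j i (1 : ℂ)
  simp only [map_add, map_neg, hi, hj] at hs hs'
  obtain ⟨htj, rfl⟩ := eq_and_eq_of_single_kronecker_add_eq hij (by simp [A, hij.symm])
    (by simp [A, hij]) (by simpa [A, hij] using left_ne_zero_of_mul_eq_one hz) hs hs'
  refine ⟨htj, ?_⟩
  rw [htj, add_kronecker, add_kronecker] at hs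
  exact add_left_cancel (add_right_cancel hs)

variable [Fintype L]

theorem map_eq_kronecker_of_forall_vecMulVec
    (hM : ∀ v : L → ℂ, ∃ s : Matrix F F ℂ, M (vecMulVec v (star v)) = vecMulVec v (star v) ⊗ₖ s)
    {i₀ : L} {t : Matrix F F ℂ} (ht : M (single i₀ i₀ 1) = single i₀ i₀ 1 ⊗ₖ t)
    (ρ : Matrix L L ℂ) : M ρ = ρ ⊗ₖ t := by
  have hdiag : ∀ i, M (single i i 1) = single i i 1 ⊗ₖ t := by
    intro i
    obtain ⟨s, hs⟩ := hM (Pi.single i 1)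
    rw [vecMulVec_single_star_single] at hs
    obtain rfl | hi := eq_or_ne i i₀
    · exact ht
    · rwa [(eq_and_map_single_add_single_eq_kronecker M hM hi.symm ht hs
        (z := 1) (by simp)).1] at hs
  have hsingle : ∀ i j, M (single i j 1) = single i j 1 ⊗ₖ t := by
    intro i j
    obtain rfl | hij := eq_or_ne i j
    · exact hdiag i
    have h1 := (eq_and_map_single_add_single_eq_kronecker M hM hij (hdiag i) (hdiag j)
      (z := 1) (by simp)).2
    have hI := (eq_and_map_single_add_single_eq_kronecker M hM hij (hdiag i) (hdiag j)
      (z := Complex.I) (by simp)).2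
    have hpol : single i j (1 : ℂ) = (2 : ℂ)⁻¹ •
        ((star (1 : ℂ) • single i j 1 + (1 : ℂ) • single j i 1)
          + Complex.I • (star Complex.I • single i j 1 + Complex.I • single j i 1)) := by
      simp only [star_one, one_smul, Complex.star_def, Complex.conj_I, smul_add, smul_smul,
        mul_neg, Complex.I_mul_I, neg_neg, mul_one]
      module
    rw [hpol, map_smul, map_add, map_smul, h1, hI]
    simp only [smul_kronecker, add_kronecker]
  have hext : M = (kroneckerBilinear (R := ℂ) (α := ℂ)).flip t :=
    ext_linearMap ℂ fun i j => LinearMap.ext_ring (hsingle i j)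
  rw [hext]
  rfl

theorem exists_posSemidef_forall_map_eq_kronecker
    (h : ∀ ψ : L → ℂ, star ψ ⬝ᵥ ψ = 1 →
      ∃ t : Matrix F F ℂ, t.PosSemidef ∧ M (vecMulVec ψ (star ψ)) = vecMulVec ψ (star ψ) ⊗ₖ t) :
    ∃ t : Matrix F F ℂ, t.PosSemidef ∧ ∀ ρ, M ρ = ρ ⊗ₖ t := by
  have hM := exists_map_vecMulVec_eq_kronecker M fun ψ hψ => (h ψ hψ).imp fun _ => And.right
  cases isEmpty_or_nonempty L
  · exact ⟨0, PosSemidef.zero, fun ρ => ext fun ⟨p, _⟩ => isEmptyElim p⟩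
  obtain ⟨t, ht, hMt⟩ := h (Pi.single (Classical.arbitrary L) 1) (by simp)
  rw [vecMulVec_single_star_single] at hMt
  exact ⟨t, ht, map_eq_kronecker_of_forall_vecMulVec M hM hMt⟩

end KroneckerFactor

section Initialization

variable {L F R P : Type*} [Fintype L] [Fintype F] [Fintype R] [Fintype P]

theorem mul_mul_conjTranspose_inj {S : Type*} [DecidableEq S] [Fintype S] {V : Matrix P S ℂ}
    (hV : Vᴴ * V = 1) {A B : Matrix S S ℂ} : V * A * Vᴴ = V * B * Vᴴ ↔ A = B := by
  refine ⟨fun h => ?_, fun h => h ▸ rfl⟩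
  calc A = (Vᴴ * V) * A * (Vᴴ * V) := by rw [hV, Matrix.one_mul, Matrix.mul_one]
    _ = Vᴴ * (V * A * Vᴴ) * V := by simp only [Matrix.mul_assoc]
    _ = Vᴴ * (V * B * Vᴴ) * V := by rw [h]
    _ = (Vᴴ * V) * B * (Vᴴ * V) := by simp only [Matrix.mul_assoc]
    _ = B := by rw [hV, Matrix.one_mul, Matrix.mul_one]

theorem fromBlocks_one_zero_mul_mul_fromBlocks_one_zero {S : Type*} [Fintype S] [DecidableEq S]
    (Y : Matrix (S ⊕ R) (S ⊕ R) ℂ) :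
    fromBlocks 1 0 0 0 * Y * fromBlocks 1 0 0 0 = fromBlocks Y.toBlocks₁₁ 0 0 0 := by
  conv_lhs => rw [← fromBlocks_toBlocks Y]
  simp [fromBlocks_multiply]

theorem initMap_add (V : Matrix P ((L × F) ⊕ R) ℂ) (τ : Matrix F F ℂ) (a b : Matrix L L ℂ) :
    initMap V τ (a + b) = initMap V τ a + initMap V τ b := by
  have hblocks : (fromBlocks (a ⊗ₖ τ + b ⊗ₖ τ) 0 0 0 : Matrix ((L × F) ⊕ R) ((L × F) ⊕ R) ℂ)
      = fromBlocks (a ⊗ₖ τ) 0 0 0 + fromBlocks (b ⊗ₖ τ) 0 0 0 := by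
    rw [fromBlocks_add]; simp
  rw [initMap, add_kronecker, hblocks, Matrix.mul_add, Matrix.add_mul]
  rfl

theorem initMap_smul (V : Matrix P ((L × F) ⊕ R) ℂ) (τ : Matrix F F ℂ) (r : ℂ) (a : Matrix L L ℂ) :
    initMap V τ (r • a) = r • initMap V τ a := by
  have hblocks : (fromBlocks (r • a ⊗ₖ τ) 0 0 0 : Matrix ((L × F) ⊕ R) ((L × F) ⊕ R) ℂ)
      = r • fromBlocks (a ⊗ₖ τ) 0 0 0 := by
    rw [fromBlocks_smul]; simp
  rw [initMap, smul_kronecker, hblocks, Matrix.mul_smul, Matrix.smul_mul]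
  rfl

def compressedInitMap {G S : Type*} (W : Matrix P ((L × G) ⊕ S) ℂ) (V : Matrix P ((L × F) ⊕ R) ℂ)
    (τ : Matrix F F ℂ) : Matrix L L ℂ →ₗ[ℂ] Matrix (L × G) (L × G) ℂ where
  toFun ρ := (Wᴴ * initMap V τ ρ * W).toBlocks₁₁
  map_add' a b := by
    rw [initMap_add, Matrix.mul_add, Matrix.add_mul]
    rfl
  map_smul' r a := by
    rw [initMap_smul, Matrix.mul_smul, Matrix.smul_mul]
    rfl

variable [DecidableEq L] [DecidableEq F] [DecidableEq R]

theorem projOf_mul_mul_projOf_eq_initMap_iff {V : Matrix P ((L × F) ⊕ R) ℂ} (hV : Vᴴ * V = 1)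
    (X : Matrix P P ℂ) (ρ : Matrix L L ℂ) (t : Matrix F F ℂ) :
    projOf V * X * projOf V = initMap V t ρ ↔ (Vᴴ * X * V).toBlocks₁₁ = ρ ⊗ₖ t := by
  have hproj : projOf V * X * projOf V = V *
      (fromBlocks (Vᴴ * X * V).toBlocks₁₁ 0 0 0 : Matrix ((L × F) ⊕ R) ((L × F) ⊕ R) ℂ) * Vᴴ := by
    rw [← fromBlocks_one_zero_mul_mul_fromBlocks_one_zero]
    simp only [projOf, Matrix.mul_assoc]
  rw [hproj, initMap, mul_mul_conjTranspose_inj hV, fromBlocks_inj]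
  simp

end Initialization

theorem stmt9_general (dL dP dF' dR' dF'' dR'' : ℕ)
    (V' : Matrix (Fin dP) ((Fin dL × Fin dF') ⊕ Fin dR') ℂ)
    (hV' : IsUnitaryMx V')
    (τ' : Matrix (Fin dF') (Fin dF') ℂ)
    (V'' : Matrix (Fin dP) ((Fin dL × Fin dF'') ⊕ Fin dR'') ℂ)
    (hV'' : IsUnitaryMx V'')
    (τ'' : Matrix (Fin dF'') (Fin dF'') ℂ)
    (hpure : ∀ ψ : Fin dL → ℂ, star ψ ⬝ᵥ ψ = 1 →
      ∃ (t' : Matrix (Fin dF') (Fin dF') ℂ) (t'' : Matrix (Fin dF'') (Fin dF'') ℂ),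
        t'.PosSemidef ∧ t''.PosSemidef ∧
        projOf V' * initMap V'' τ'' (Matrix.vecMulVec ψ (star ψ)) * projOf V'
          = initMap V' t' (Matrix.vecMulVec ψ (star ψ)) ∧
        projOf V'' * initMap V' τ' (Matrix.vecMulVec ψ (star ψ)) * projOf V''
          = initMap V'' t'' (Matrix.vecMulVec ψ (star ψ))) :
    ∃ (t' : Matrix (Fin dF') (Fin dF') ℂ) (t'' : Matrix (Fin dF'') (Fin dF'') ℂ),
      t'.PosSemidef ∧ t''.PosSemidef ∧
      ∀ ρ : Matrix (Fin dL) (Fin dL) ℂ, IsDensity ρ →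
        projOf V' * initMap V'' τ'' ρ * projOf V' = initMap V' t' ρ ∧
        projOf V'' * initMap V' τ' ρ * projOf V'' = initMap V'' t'' ρ := by
  have iff' := projOf_mul_mul_projOf_eq_initMap_iff hV'.1
  have iff'' := projOf_mul_mul_projOf_eq_initMap_iff hV''.1
  obtain ⟨t', ht', h'⟩ := exists_posSemidef_forall_map_eq_kronecker
    (compressedInitMap V' V'' τ'') fun ψ hψ => by
      obtain ⟨t', -, ht', -, h', -⟩ := hpure ψ hψ
      exact ⟨t', ht', (iff' _ _ _).1 h'⟩
  obtain ⟨t'', ht'', h''⟩ := exists_posSemidef_forall_map_eq_kronecker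
    (compressedInitMap V'' V' τ') fun ψ hψ => by
      obtain ⟨-, t'', -, ht'', -, h''⟩ := hpure ψ hψ
      exact ⟨t'', ht'', (iff'' _ _ _).1 h''⟩
  exact ⟨t', t'', ht', ht'', fun ρ _ => ⟨(iff' _ _ _).2 (h' ρ), (iff'' _ _ _).2 (h'' ρ)⟩⟩

/-- if two full-rank subsystem initializations are compatible on
every pure state (with possibly state-dependent co-factors), then they are
compatible with state-independent co-factors, on all density operators. -/
theorem stmt9 (dL dP dF' dR' dF'' dR'' : ℕ)
    (V' : Matrix (Fin dP) ((Fin dL × Fin dF') ⊕ Fin dR') ℂ)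
    (hV' : IsUnitaryMx V')
    (τ' : Matrix (Fin dF') (Fin dF') ℂ)
    (hτ' : τ'.PosDef ∧ τ'.trace = 1)
    (V'' : Matrix (Fin dP) ((Fin dL × Fin dF'') ⊕ Fin dR'') ℂ)
    (hV'' : IsUnitaryMx V'')
    (τ'' : Matrix (Fin dF'') (Fin dF'') ℂ)
    (hτ'' : τ''.PosDef ∧ τ''.trace = 1)
    (hpure : ∀ ψ : Fin dL → ℂ, star ψ ⬝ᵥ ψ = 1 →
      ∃ (t' : Matrix (Fin dF') (Fin dF') ℂ) (t'' : Matrix (Fin dF'') (Fin dF'') ℂ),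
        t'.PosSemidef ∧ t''.PosSemidef ∧
        projOf V' * initMap V'' τ'' (Matrix.vecMulVec ψ (star ψ)) * projOf V'
          = initMap V' t' (Matrix.vecMulVec ψ (star ψ)) ∧
        projOf V'' * initMap V' τ' (Matrix.vecMulVec ψ (star ψ)) * projOf V''
          = initMap V'' t'' (Matrix.vecMulVec ψ (star ψ))) :
    ∃ (t' : Matrix (Fin dF') (Fin dF') ℂ) (t'' : Matrix (Fin dF'') (Fin dF'') ℂ),
      t'.PosSemidef ∧ t''.PosSemidef ∧
      ∀ ρ : Matrix (Fin dL) (Fin dL) ℂ, IsDensity ρ →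
        projOf V' * initMap V'' τ'' ρ * projOf V' = initMap V' t' ρ ∧
        projOf V'' * initMap V' τ' ρ * projOf V'' = initMap V'' t'' ρ :=
  stmt9_general dL dP dF' dR' dF'' dR'' V' hV' τ' V'' hV'' τ'' hpure
end
end

section
/- On (ℂ²)^{⊗7} define S₁ = X⊗I⊗X⊗X⊗X⊗I⊗I, S₂ = X⊗X⊗I⊗X⊗I⊗X⊗I, S₃ = I⊗X⊗X⊗X⊗I⊗I⊗X, S₄ = Z⊗Z⊗I⊗I⊗Z⊗I⊗Z, S₅ = Z⊗I⊗Z⊗I⊗I⊗Z⊗Z, S₆ = I⊗I⊗I⊗Z⊗Z⊗Z⊗Z, logical operators X̄ = X⊗X⊗X⊗I⊗I⊗I⊗I and Z̄ = Z⊗I⊗I⊗I⊗Z⊗Z⊗I, and correction operators C₁ = Z⊗I⊗Z⊗Z⊗I⊗I⊗I, C₂ = Z⊗Z⊗I⊗Z⊗I⊗I⊗I, C₃ = I⊗Z⊗Z⊗Z⊗I⊗I⊗I, C₄ = I⊗X⊗I⊗I⊗I⊗I⊗I, C₅ = I⊗I⊗X⊗I⊗I⊗I⊗I, C₆ = I⊗I⊗I⊗X⊗I⊗I⊗I.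 Then: (a) S₁,…,S₆ are pairwise commuting Hermitian unitaries squaring to the identity; (b) C_i S_i = −S_i C_i for each i and C_i S_j = S_j C_i for i ≠ j; (c) each C_i and each S_i commutes with X̄ and with Z̄. Consequently, defining Φ_k(ρ) = A_{+,k} ρ A_{+,k}* + A_{−,k} ρ A_{−,k}* with A_{+,k} = (1+S_k)/2, A_{−,k} = C_k(1−S_k)/2, and Φ_P = Φ₆ ∘ ⋯ ∘ Φ₁, for every density operator ρ_L on the first qubit and every density operator σ on the last six qubits satisfying tr( (X^i ⊗ X^i ⊗ I ⊗ Z^j ⊗ Z^j ⊗ I) σ ) = 1 for all i, j ∈ {0,1}, the output Φ_P(ρ_L ⊗ σ) is supported on the joint +1-eigenspace of S₁,…,S₆ and satisfies tr( X̄^i Z̄^j Φ_P(ρ_L ⊗ σ) ) = tr( X^i Z^j ρ_L ) for all i, j ∈ {0,1}. -/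
open Matrix Kronecker
open scoped ComplexOrder

noncomputable section

/-- 2×2 identity. -/
def Im : Matrix (Fin 2) (Fin 2) ℂ := 1

/-- Seven-qubit index type (right nested). -/
abbrev Q7 := Fin 2 × (Fin 2 × (Fin 2 × (Fin 2 × (Fin 2 × (Fin 2 × Fin 2)))))

/-- Six-qubit index type (right nested). -/
abbrev Q6 := Fin 2 × (Fin 2 × (Fin 2 × (Fin 2 × (Fin 2 × Fin 2))))

/-- Tensor product of seven single-qubit operators. -/
def k7 (a b c d e f g : Matrix (Fin 2) (Fin 2) ℂ) : Matrix Q7 Q7 ℂ :=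
  a ⊗ₖ (b ⊗ₖ (c ⊗ₖ (d ⊗ₖ (e ⊗ₖ (f ⊗ₖ g)))))

/-- Tensor product of six single-qubit operators. -/
def k6 (a b c d e f : Matrix (Fin 2) (Fin 2) ℂ) : Matrix Q6 Q6 ℂ :=
  a ⊗ₖ (b ⊗ₖ (c ⊗ₖ (d ⊗ₖ (e ⊗ₖ f))))

/-- Stabilizer generators of Steane's `[[7,1,3]]` code. -/
def S7 : Fin 6 → Matrix Q7 Q7 ℂ :=
  ![k7 Xm Im Xm Xm Xm Im Im,
    k7 Xm Xm Im Xm Im Xm Im,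
    k7 Im Xm Xm Xm Im Im Xm,
    k7 Zm Zm Im Im Zm Im Zm,
    k7 Zm Im Zm Im Im Zm Zm,
    k7 Im Im Im Zm Zm Zm Zm]

/-- Correction operators of Steane's code. -/
def C7 : Fin 6 → Matrix Q7 Q7 ℂ :=
  ![k7 Zm Im Zm Zm Im Im Im,
    k7 Zm Zm Im Zm Im Im Im,
    k7 Im Zm Zm Zm Im Im Im,
    k7 Im Xm Im Im Im Im Im,
    k7 Im Im Xm Im Im Im Im,
    k7 Im Im Im Xm Im Im Im]

/-- Logical `X̄ = X⊗X⊗X⊗I⊗I⊗I⊗I`. -/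
def Xbar7 : Matrix Q7 Q7 ℂ := k7 Xm Xm Xm Im Im Im Im

/-- Logical `Z̄ = Z⊗I⊗I⊗I⊗Z⊗Z⊗I`. -/
def Zbar7 : Matrix Q7 Q7 ℂ := k7 Zm Im Im Im Zm Zm Im

/-- The dissipative encoder `Φ_P = Φ₆ ∘ ⋯ ∘ Φ₁` of Steane's code. -/
def PhiP7 (ρ : Matrix Q7 Q7 ℂ) : Matrix Q7 Q7 ℂ :=
  seqApply (List.ofFn fun k => encMap (S7 k) (C7 k)) ρ

/-! ### Auxiliary lemmas -/

section Aux

lemma XmXm : Xm * Xm = 1 := by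
  ext i j; fin_cases i <;> fin_cases j <;>
    simp [Xm, Matrix.mul_apply, Fin.sum_univ_two, Matrix.one_apply]

lemma ZmZm : Zm * Zm = 1 := by
  ext i j; fin_cases i <;> fin_cases j <;>
    simp [Zm, Matrix.mul_apply, Fin.sum_univ_two, Matrix.one_apply]

lemma XmZm : Xm * Zm = -(Zm * Xm) := by
  ext i j; fin_cases i <;> fin_cases j <;>
    simp [Xm, Zm, Matrix.mul_apply, Fin.sum_univ_two]

lemma XmH : Xmᴴ = Xm := by
  ext i j; fin_cases i <;> fin_cases j <;> simp [Xm, Matrix.conjTranspose_apply]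

lemma ZmH : Zmᴴ = Zm := by
  ext i j; fin_cases i <;> fin_cases j <;> simp [Zm, Matrix.conjTranspose_apply]

lemma negKron {l m n p : Type*} [Fintype l] [Fintype m] [Fintype n] [Fintype p]
    (A : Matrix l m ℂ) (B : Matrix n p ℂ) : (-A) ⊗ₖ B = -(A ⊗ₖ B) := by
  rw [← neg_one_smul ℂ A, Matrix.smul_kronecker, neg_one_smul]

lemma kronNeg {l m n p : Type*} [Fintype l] [Fintype m] [Fintype n] [Fintype p]
    (A : Matrix l m ℂ) (B : Matrix n p ℂ) : A ⊗ₖ (-B) = -(A ⊗ₖ B) := by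
  rw [← neg_one_smul ℂ B, Matrix.kronecker_smul, neg_one_smul]

lemma kronCT {l m n p : Type*} [Fintype l] [Fintype m] [Fintype n] [Fintype p]
    (A : Matrix l m ℂ) (B : Matrix n p ℂ) : (A ⊗ₖ B)ᴴ = Aᴴ ⊗ₖ Bᴴ := by
  ext ⟨i,j⟩ ⟨k,l⟩
  simp [Matrix.conjTranspose_apply, Matrix.kroneckerMap_apply]

lemma cons_val_five {α : Type*} (a b c d e f : α) : ![a,b,c,d,e,f] 5 = f := rfl

lemma S7_0 : S7 0 = k7 Xm Im Xm Xm Xm Im Im := rfl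
lemma S7_1 : S7 1 = k7 Xm Xm Im Xm Im Xm Im := rfl
lemma S7_2 : S7 2 = k7 Im Xm Xm Xm Im Im Xm := rfl
lemma S7_3 : S7 3 = k7 Zm Zm Im Im Zm Im Zm := rfl
lemma S7_4 : S7 4 = k7 Zm Im Zm Im Im Zm Zm := rfl
lemma S7_5 : S7 5 = k7 Im Im Im Zm Zm Zm Zm := rfl
lemma C7_0 : C7 0 = k7 Zm Im Zm Zm Im Im Im := rfl
lemma C7_1 : C7 1 = k7 Zm Zm Im Zm Im Im Im := rfl
lemma C7_2 : C7 2 = k7 Im Zm Zm Zm Im Im Im := rfl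
lemma C7_3 : C7 3 = k7 Im Xm Im Im Im Im Im := rfl
lemma C7_4 : C7 4 = k7 Im Im Xm Im Im Im Im := rfl
lemma C7_5 : C7 5 = k7 Im Im Im Xm Im Im Im := rfl

variable {n : Type*} [Fintype n] [DecidableEq n]

lemma AplH {S : Matrix n n ℂ} (hS : Sᴴ = S) : (Apl S)ᴴ = Apl S := by
  simp [Apl, Matrix.conjTranspose_smul, hS, Matrix.conjTranspose_add]

lemma AmiH {C S : Matrix n n ℂ} (hS : Sᴴ = S) :
    (Ami C S)ᴴ = ((2:ℂ)⁻¹ • (1 - S)) * Cᴴ := by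
  simp [Ami, Matrix.conjTranspose_mul, Matrix.conjTranspose_smul, hS,
    Matrix.conjTranspose_sub]

lemma krausSum {S C : Matrix n n ℂ} (hS : Sᴴ = S) (hS2 : S * S = 1) (hC : Cᴴ = C)
    (hC2 : C * C = 1) : (Apl S)ᴴ * Apl S + (Ami C S)ᴴ * Ami C S = 1 := by
  rw [AplH hS, AmiH hS, hC, Ami]
  have h1 : ((2:ℂ)⁻¹ • (1 - S)) * C * (C * ((2:ℂ)⁻¹ • (1 - S)))
      = ((2:ℂ)⁻¹ • (1 - S)) * ((2:ℂ)⁻¹ • (1 - S)) := by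
    rw [mul_assoc, ← mul_assoc C, hC2, one_mul]
  rw [h1, Apl]
  have e : ∀ A B : Matrix n n ℂ, ((2:ℂ)⁻¹ • A) * ((2:ℂ)⁻¹ • B) = ((4:ℂ)⁻¹) • (A * B) := by
    intro A B
    rw [Matrix.smul_mul, Matrix.mul_smul, smul_smul]
    norm_num
  rw [e, e, ← smul_add]
  have expand : (1 + S) * (1 + S) + (1 - S) * (1 - S) = (1 + S * S) + (1 + S * S) := by
    noncomm_ring
  rw [expand, hS2]
  have four : ((1:Matrix n n ℂ) + 1) + (1 + 1) = (4:ℂ) • 1 := by module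
  rw [four, smul_smul]
  norm_num

lemma trace_encMap {L S C M : Matrix n n ℂ} (hS : Sᴴ = S) (hS2 : S * S = 1)
    (hC : Cᴴ = C) (hC2 : C * C = 1) (hLS : L * S = S * L) (hLC : L * C = C * L) :
    (L * encMap S C M).trace = (L * M).trace := by
  have hLp : L * Apl S = Apl S * L := by
    simp only [Apl, Matrix.mul_smul, Matrix.smul_mul, mul_add, add_mul, mul_one, one_mul, hLS]
  have hLm : L * Ami C S = Ami C S * L := by
    simp only [Ami, Matrix.mul_smul, Matrix.smul_mul, mul_sub, sub_mul, mul_one, one_mul,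
      ← mul_assoc, hLC]
    rw [mul_assoc C L S, hLS, ← mul_assoc]
  have key : ∀ A : Matrix n n ℂ, L * A = A * L →
      (L * (A * M * Aᴴ)).trace = ((Aᴴ * A) * (L * M)).trace := by
    intro A hA
    rw [← mul_assoc, ← mul_assoc, hA, Matrix.trace_mul_comm, ← mul_assoc, ← mul_assoc,
      mul_assoc (Aᴴ * A)]
  rw [encMap, mul_add, Matrix.trace_add, key _ hLp, key _ hLm, ← Matrix.trace_add,
    ← add_mul, krausSum hS hS2 hC hC2, one_mul]

lemma absorbL {S C M : Matrix n n ℂ} (hS : Sᴴ = S) (hS2 : S * S = 1)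
    (hCS : C * S = -(S * C)) :
    S * encMap S C M = encMap S C M ∧ encMap S C M * S = encMap S C M := by
  have hSA : S * Apl S = Apl S := by
    simp only [Apl, Matrix.mul_smul, mul_add, mul_one, hS2]
    rw [add_comm]
  have hSC : S * C = -(C * S) := by rw [hCS, neg_neg]
  have hSAm : S * Ami C S = Ami C S := by
    rw [Ami, ← mul_assoc, hSC, Matrix.neg_mul, mul_assoc]
    have h2 : S * ((2:ℂ)⁻¹ • (1 - S)) = -((2:ℂ)⁻¹ • (1 - S)) := by
      rw [Matrix.mul_smul, mul_sub, mul_one, hS2, ← smul_neg, neg_sub]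
    rw [h2, mul_neg, neg_neg]
  have hrt : ∀ A : Matrix n n ℂ, S * A = A → Aᴴ * S = Aᴴ := by
    intro A hA
    calc Aᴴ * S = (Sᴴ * A)ᴴ := by
          rw [Matrix.conjTranspose_mul, Matrix.conjTranspose_conjTranspose]
    _ = Aᴴ := by rw [hS, hA]
  have lft : ∀ A : Matrix n n ℂ, S * A = A → S * (A * M * Aᴴ) = A * M * Aᴴ := by
    intro A hA
    rw [← mul_assoc, ← mul_assoc, hA]
  have rgt : ∀ A : Matrix n n ℂ, S * A = A → A * M * Aᴴ * S = A * M * Aᴴ := by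
    intro A hA
    rw [mul_assoc, hrt _ hA]
  constructor
  · rw [encMap, mul_add, lft _ hSA, lft _ hSAm]
  · rw [encMap, add_mul, rgt _ hSA, rgt _ hSAm]

lemma passL {T S C M : Matrix n n ℂ} (hT : Tᴴ = T) (hTS : T * S = S * T)
    (hTC : T * C = C * T) (hTM : T * M = M) (hMT : M * T = M) :
    T * encMap S C M = encMap S C M ∧ encMap S C M * T = encMap S C M := by
  have hTp : T * Apl S = Apl S * T := by
    simp only [Apl, Matrix.mul_smul, Matrix.smul_mul, mul_add, add_mul, mul_one, one_mul, hTS]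
  have hTm : T * Ami C S = Ami C S * T := by
    simp only [Ami, Matrix.mul_smul, Matrix.smul_mul, mul_sub, sub_mul, mul_one, one_mul,
      ← mul_assoc, hTC]
    rw [mul_assoc C T S, hTS, ← mul_assoc]
  have hrt : ∀ A : Matrix n n ℂ, T * A = A * T → Aᴴ * T = T * Aᴴ := by
    intro A hA
    calc Aᴴ * T = Aᴴ * Tᴴ := by rw [hT]
    _ = (T * A)ᴴ := by rw [Matrix.conjTranspose_mul]
    _ = (A * T)ᴴ := by rw [hA]
    _ = Tᴴ * Aᴴ := by rw [Matrix.conjTranspose_mul]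
    _ = T * Aᴴ := by rw [hT]
  have lft : ∀ A : Matrix n n ℂ, T * A = A * T → T * (A * M * Aᴴ) = A * M * Aᴴ := by
    intro A hA
    rw [← mul_assoc, ← mul_assoc, hA, mul_assoc A T M, hTM]
  have rgt : ∀ A : Matrix n n ℂ, T * A = A * T → A * M * Aᴴ * T = A * M * Aᴴ := by
    intro A hA
    rw [mul_assoc, hrt _ hA, ← mul_assoc, mul_assoc A M T, hMT]
  constructor
  · rw [encMap, mul_add, lft _ hTp, lft _ hTm]
  · rw [encMap, add_mul, rgt _ hTp, rgt _ hTm]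

end Aux

set_option maxHeartbeats 4000000 in
/-- properties of Steane's `[[7,1,3]]` code construction and its
finite-time dissipative encoder. -/
theorem stmt13 :
    (∀ i j, S7 i * S7 j = S7 j * S7 i) ∧
    (∀ i, (S7 i).IsHermitian) ∧
    (∀ i, S7 i * S7 i = 1) ∧
    (∀ i, C7 i * S7 i = -(S7 i * C7 i)) ∧
    (∀ i j, i ≠ j → C7 i * S7 j = S7 j * C7 i) ∧
    (∀ i, C7 i * Xbar7 = Xbar7 * C7 i ∧ C7 i * Zbar7 = Zbar7 * C7 i ∧
      S7 i * Xbar7 = Xbar7 * S7 i ∧ S7 i * Zbar7 = Zbar7 * S7 i) ∧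
    (∀ Pc : Matrix Q7 Q7 ℂ, Pc.IsHermitian → Pc * Pc = Pc →
      (∀ ψ : Q7 → ℂ, Pc.mulVec ψ = ψ ↔ ∀ k, (S7 k).mulVec ψ = ψ) →
      ∀ (ρL : Matrix (Fin 2) (Fin 2) ℂ) (σ : Matrix Q6 Q6 ℂ),
        IsDensity ρL → IsDensity σ →
        (∀ i j : Fin 2,
          (k6 (Xm ^ (i : ℕ)) (Xm ^ (i : ℕ)) Im (Zm ^ (j : ℕ)) (Zm ^ (j : ℕ)) Im
            * σ).trace = 1) →
        (Pc * PhiP7 (ρL ⊗ₖ σ) * Pc = PhiP7 (ρL ⊗ₖ σ) ∧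
         ∀ i j : Fin 2,
           (Xbar7 ^ (i : ℕ) * Zbar7 ^ (j : ℕ) * PhiP7 (ρL ⊗ₖ σ)).trace
             = (Xm ^ (i : ℕ) * Zm ^ (j : ℕ) * ρL).trace)) := by
  have hcommS : ∀ i j, S7 i * S7 j = S7 j * S7 i := by
    intro i j
    fin_cases i <;> fin_cases j <;>
      simp [S7, cons_val_five, S7_0, S7_1, S7_2, S7_3, S7_4, S7_5,
        k7, Im, ← Matrix.mul_kronecker_mul, XmXm, ZmZm, XmZm, negKron, kronNeg, neg_neg,
        Matrix.one_kronecker_one]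
  have hherm : ∀ i, (S7 i)ᴴ = S7 i := by
    intro i
    fin_cases i <;>
      simp [S7, cons_val_five, S7_0, S7_1, S7_2, S7_3, S7_4, S7_5,
        k7, Im, kronCT, XmH, ZmH, Matrix.conjTranspose_one]
  have hsq : ∀ i, S7 i * S7 i = 1 := by
    intro i
    fin_cases i <;>
      simp [S7, cons_val_five, S7_0, S7_1, S7_2, S7_3, S7_4, S7_5,
        k7, Im, ← Matrix.mul_kronecker_mul, XmXm, ZmZm, Matrix.one_kronecker_one]
  have hCS : ∀ i, C7 i * S7 i = -(S7 i * C7 i) := by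
    intro i
    fin_cases i <;>
      simp [S7, C7, cons_val_five, S7_0, S7_1, S7_2, S7_3, S7_4, S7_5,
        C7_0, C7_1, C7_2, C7_3, C7_4, C7_5,
        k7, Im, ← Matrix.mul_kronecker_mul, XmXm, ZmZm, XmZm, negKron, kronNeg, neg_neg,
        Matrix.one_kronecker_one]
  have hCSne : ∀ i j, i ≠ j → C7 i * S7 j = S7 j * C7 i := by
    intro i j hij
    fin_cases i <;> fin_cases j <;> first
    | exact absurd rfl hij
    | simp [S7, C7, cons_val_five, S7_0, S7_1, S7_2, S7_3, S7_4, S7_5,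
        C7_0, C7_1, C7_2, C7_3, C7_4, C7_5,
        k7, Im, ← Matrix.mul_kronecker_mul, XmXm, ZmZm, XmZm, negKron, kronNeg, neg_neg,
        Matrix.one_kronecker_one]
  have hlog : ∀ i, C7 i * Xbar7 = Xbar7 * C7 i ∧ C7 i * Zbar7 = Zbar7 * C7 i ∧
      S7 i * Xbar7 = Xbar7 * S7 i ∧ S7 i * Zbar7 = Zbar7 * S7 i := by
    intro i
    fin_cases i <;>
      refine ⟨?_, ?_, ?_, ?_⟩ <;>
      simp [S7, C7, Xbar7, Zbar7, cons_val_five, S7_0, S7_1, S7_2, S7_3, S7_4, S7_5,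
        C7_0, C7_1, C7_2, C7_3, C7_4, C7_5,
        k7, Im, ← Matrix.mul_kronecker_mul, XmXm, ZmZm, XmZm, negKron, kronNeg, neg_neg,
        Matrix.one_kronecker_one]
  have hChern : ∀ i, (C7 i)ᴴ = C7 i := by
    intro i
    fin_cases i <;>
      simp [C7, cons_val_five, C7_0, C7_1, C7_2, C7_3, C7_4, C7_5,
        k7, Im, kronCT, XmH, ZmH, Matrix.conjTranspose_one]
  have hCsq : ∀ i, C7 i * C7 i = 1 := by
    intro i
    fin_cases i <;>
      simp [C7, cons_val_five, C7_0, C7_1, C7_2, C7_3, C7_4, C7_5,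
        k7, Im, ← Matrix.mul_kronecker_mul, XmXm, ZmZm, Matrix.one_kronecker_one]
  refine ⟨hcommS, hherm, hsq, hCS, hCSne, hlog, ?_⟩
  intro Pc hPcH hPc2 hPcChar ρL σ hρL hσd htr
  have unfold : PhiP7 (ρL ⊗ₖ σ) = encMap (S7 5) (C7 5) (encMap (S7 4) (C7 4) (encMap (S7 3) (C7 3)
      (encMap (S7 2) (C7 2) (encMap (S7 1) (C7 1) (encMap (S7 0) (C7 0) (ρL ⊗ₖ σ)))))) := rfl
  have hfixS : ∀ k : Fin 6, S7 k * PhiP7 (ρL ⊗ₖ σ) = PhiP7 (ρL ⊗ₖ σ) ∧ PhiP7 (ρL ⊗ₖ σ) * S7 k = PhiP7 (ρL ⊗ₖ σ) := by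
    intro k
    have chain : ∀ (j : Fin 6) (M : Matrix Q7 Q7 ℂ), j ≠ k →
        (S7 k * M = M ∧ M * S7 k = M) →
        (S7 k * encMap (S7 j) (C7 j) M = encMap (S7 j) (C7 j) M ∧
          encMap (S7 j) (C7 j) M * S7 k = encMap (S7 j) (C7 j) M) :=
      fun j M hjk h => passL (hherm k) (hcommS k j) ((hCSne j k hjk).symm) h.1 h.2
    have abs' : ∀ M : Matrix Q7 Q7 ℂ,
        S7 k * encMap (S7 k) (C7 k) M = encMap (S7 k) (C7 k) M ∧
        encMap (S7 k) (C7 k) M * S7 k = encMap (S7 k) (C7 k) M :=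
      fun M => absorbL (hherm k) (hsq k) (hCS k)
    rw [unfold]
    fin_cases k
    · exact chain 5 _ (by decide) (chain 4 _ (by decide) (chain 3 _ (by decide)
        (chain 2 _ (by decide) (chain 1 _ (by decide) (abs' _)))))
    · exact chain 5 _ (by decide) (chain 4 _ (by decide) (chain 3 _ (by decide)
        (chain 2 _ (by decide) (abs' _))))
    · exact chain 5 _ (by decide) (chain 4 _ (by decide) (chain 3 _ (by decide) (abs' _)))
    · exact chain 5 _ (by decide) (chain 4 _ (by decide) (abs' _))
    · exact chain 5 _ (by decide) (abs' _)
    · exact abs' _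
  have hPcL : ∀ M : Matrix Q7 Q7 ℂ, (∀ k, S7 k * M = M) → Pc * M = M := by
    intro M hM
    ext i j
    have hcol : Pc.mulVec (fun l => M l j) = fun l => M l j := by
      rw [hPcChar]
      intro k
      funext l
      have h : (S7 k * M) l j = M l j := by rw [hM k]
      simpa [Matrix.mul_apply, Matrix.mulVec, dotProduct] using h
    have h2 := congrFun hcol i
    simpa [Matrix.mul_apply, Matrix.mulVec, dotProduct] using h2
  have hPcR : ∀ M : Matrix Q7 Q7 ℂ, (∀ k, M * S7 k = M) → M * Pc = M := by
    intro M hM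
    have h1 : ∀ k, S7 k * Mᴴ = Mᴴ := by
      intro k
      calc S7 k * Mᴴ = (M * (S7 k)ᴴ)ᴴ := by
            rw [Matrix.conjTranspose_mul, Matrix.conjTranspose_conjTranspose]
      _ = Mᴴ := by rw [hherm k, hM k]
    have h2 := hPcL Mᴴ h1
    calc M * Pc = (Pcᴴ * Mᴴ)ᴴ := by
          rw [Matrix.conjTranspose_mul, Matrix.conjTranspose_conjTranspose,
            Matrix.conjTranspose_conjTranspose]
    _ = M := by rw [hPcH.eq, h2, Matrix.conjTranspose_conjTranspose]
  constructor
  · rw [hPcL _ (fun k => (hfixS k).1)]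
    exact hPcR _ (fun k => (hfixS k).2)
  · intro i j
    have tchain : ∀ L : Matrix Q7 Q7 ℂ, (∀ k, L * S7 k = S7 k * L) →
        (∀ k, L * C7 k = C7 k * L) → (L * PhiP7 (ρL ⊗ₖ σ)).trace = (L * (ρL ⊗ₖ σ)).trace := by
      intro L hLS hLC
      rw [unfold,
        trace_encMap (hherm 5) (hsq 5) (hChern 5) (hCsq 5) (hLS 5) (hLC 5),
        trace_encMap (hherm 4) (hsq 4) (hChern 4) (hCsq 4) (hLS 4) (hLC 4),
        trace_encMap (hherm 3) (hsq 3) (hChern 3) (hCsq 3) (hLS 3) (hLC 3),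
        trace_encMap (hherm 2) (hsq 2) (hChern 2) (hCsq 2) (hLS 2) (hLC 2),
        trace_encMap (hherm 1) (hsq 1) (hChern 1) (hCsq 1) (hLS 1) (hLC 1),
        trace_encMap (hherm 0) (hsq 0) (hChern 0) (hCsq 0) (hLS 0) (hLC 0)]
    have hLS : ∀ k, (Xbar7 ^ (i:ℕ) * Zbar7 ^ (j:ℕ)) * S7 k = S7 k * (Xbar7 ^ (i:ℕ) * Zbar7 ^ (j:ℕ)) := by
      intro k
      have c1 : Commute (S7 k) Xbar7 := (hlog k).2.2.1
      have c2 : Commute (S7 k) Zbar7 := (hlog k).2.2.2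
      exact (((c1.pow_right _).mul_right (c2.pow_right _)).symm).eq
    have hLC : ∀ k, (Xbar7 ^ (i:ℕ) * Zbar7 ^ (j:ℕ)) * C7 k = C7 k * (Xbar7 ^ (i:ℕ) * Zbar7 ^ (j:ℕ)) := by
      intro k
      have c1 : Commute (C7 k) Xbar7 := (hlog k).1
      have c2 : Commute (C7 k) Zbar7 := (hlog k).2.1
      exact (((c1.pow_right _).mul_right (c2.pow_right _)).symm).eq
    rw [tchain _ hLS hLC]
    have hXsplit : Xbar7 = Xm ⊗ₖ k6 Xm Xm Im Im Im Im := rfl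
    have hZsplit : Zbar7 = Zm ⊗ₖ k6 Im Im Im Zm Zm Im := rfl
    have hXZsplit : Xbar7 * Zbar7 = (Xm * Zm) ⊗ₖ k6 Xm Xm Im Zm Zm Im := by
      rw [hXsplit, hZsplit, ← Matrix.mul_kronecker_mul]
      simp [k6, Im, ← Matrix.mul_kronecker_mul]
    have htr00 : σ.trace = 1 := hσd.2
    have htr10 : (k6 Xm Xm Im Im Im Im * σ).trace = 1 := by
      have := htr 1 0
      simpa [Im] using this
    have htr01 : (k6 Im Im Im Zm Zm Im * σ).trace = 1 := by
      have := htr 0 1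
      simpa [Im] using this
    have htr11 : (k6 Xm Xm Im Zm Zm Im * σ).trace = 1 := by
      have := htr 1 1
      simpa [Im] using this
    fin_cases i <;> fin_cases j <;>
      simp only [Fin.mk_zero, Fin.mk_one, Fin.val_zero, Fin.val_one, pow_zero, pow_one,
        one_mul, mul_one]
    · rw [Matrix.trace_kronecker, htr00, mul_one]
    · rw [hZsplit, ← Matrix.mul_kronecker_mul, Matrix.trace_kronecker, htr01, mul_one]
    · rw [hXsplit, ← Matrix.mul_kronecker_mul, Matrix.trace_kronecker, htr10, mul_one]
    · rw [hXZsplit, ← Matrix.mul_kronecker_mul, Matrix.trace_kronecker, htr11, mul_one]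
end
end
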